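/- arXiv:2501.02499 — 12 statements merged into one kernel-verified Lean document; each statement's English description precedes it below -/
import Mathlib

section
/- Let q be a real number with q > 0 and q ≠ 1, and let (T_n)_{n≥0} be a sequence of functions from ℝ to ℝ. Then there exists a real sequence (a_k)_{k≥0} such that T_n(x) = (q−1)^{−n} · Σ_{k=0}^{n} (−1)^{n−k} · binom(n,k) · a_k · q^{k·x} for all n ≥ 0 and all x ∈ ℝ, if and only if T_n(x) = Σ_{k=0}^{n} binom(n,k) · T_k(0) · q^{k·x} · [x]^{n−k} for all n ≥ 0 and all x ∈ ℝ. -/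
open Finset

/-!
Write `B_u c n = ∑ k ≤ n, u^(n-k) * C(n,k) * c k` for the binomial transform with parameter `u`.
With `y = q^x` and `c k = (q-1)^k * T k 0`, the Carlitz form reads
`(q-1)^n T n x = B_{-1} (a k * y^k) n`, and since `y - 1 = (q-1) [x]` the second condition reads
`(q-1)^n T n x = B_{y-1} (c k * y^k) n`. The identity `B_u (B_w c k * v^k) = B_{u+wv} (c k * v^k)`
links the two: at `x = 0` the Carlitz form says `c = B_{-1} a`, hence `a = B_1 c` because
`B_1 ∘ B_{-1} = B_0 = id`; conversely `a := B_1 c` has the Carlitz form.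
-/

/-- The q-bracket: `[x] = (q^x - 1)/(q - 1)`. -/
noncomputable def qb (q x : ℝ) : ℝ := (q ^ x - 1) / (q - 1)

section BinomialTransform

variable {R : Type*} [CommRing R]

def binomialTransform (u : R) (c : ℕ → R) (n : ℕ) : R :=
  ∑ k ∈ range (n + 1), u ^ (n - k) * n.choose k * c k

theorem binomialTransform_binomialTransform_mul_pow (u v w : R) (c : ℕ → R) (n : ℕ) :
    binomialTransform u (fun k => binomialTransform w c k * v ^ k) n =
      binomialTransform (u + w * v) (fun k => c k * v ^ k) n := by
  simp only [binomialTransform, sum_mul, mul_sum]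
  rw [sum_comm' (t' := range (n + 1)) (s' := fun j => Ico j (n + 1))
    (fun k j => by simp only [mem_range, mem_Ico]; omega)]
  refine sum_congr rfl fun j hj => ?_
  have hjn : j ≤ n := Nat.lt_succ_iff.mp (mem_range.mp hj)
  rw [add_comm u, add_pow, sum_Ico_eq_sum_range, show n + 1 - j = n - j + 1 by omega, sum_mul,
    sum_mul]
  refine sum_congr rfl fun t ht => ?_
  have hchoose : ((n.choose (j + t) * (j + t).choose j : ℕ) : R) =
      (n.choose j * (n - j).choose t : ℕ) := by
    rw [Nat.choose_mul (Nat.le_add_right j t), Nat.add_sub_cancel_left]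
  push_cast at hchoose
  rw [show n - (j + t) = n - j - t by omega, Nat.add_sub_cancel_left, pow_add, mul_pow]
  linear_combination (u ^ (n - j - t) * w ^ t * c j * (v ^ j * v ^ t)) * hchoose

theorem binomialTransform_zero (c : ℕ → R) (n : ℕ) : binomialTransform 0 c n = c n := by
  rw [binomialTransform, sum_range_succ, sum_eq_zero fun k hk => ?_]
  · simp
  · simp [Nat.sub_ne_zero_of_lt (mem_range.mp hk)]

theorem binomialTransform_binomialTransform (u w : R) (c : ℕ → R) (n : ℕ) :
    binomialTransform u (binomialTransform w c) n = binomialTransform (u + w) c n := by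
  simpa using binomialTransform_binomialTransform_mul_pow u 1 w c n

theorem binomialTransform_one_binomialTransform_neg_one (c : ℕ → R) :
    binomialTransform 1 (binomialTransform (-1) c) = c := by
  funext n
  rw [binomialTransform_binomialTransform, add_neg_cancel, binomialTransform_zero]

theorem binomialTransform_smul_mul_pow (s u : R) (c : ℕ → R) (n : ℕ) :
    binomialTransform (s * u) (fun k => s ^ k * c k) n = s ^ n * binomialTransform u c n := by
  rw [binomialTransform, binomialTransform, mul_sum]
  refine sum_congr rfl fun k hk => ?_
  rw [mul_pow, ← pow_mul_pow_sub s (Nat.lt_succ_iff.mp (mem_range.mp hk))]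
  ring

end BinomialTransform

theorem sum_carlitz_eq_binomialTransform {q : ℝ} (hq : 0 ≤ q) (a : ℕ → ℝ) (n : ℕ)
    (x : ℝ) :
    ∑ k ∈ range (n + 1), (-1 : ℝ) ^ (n - k) * (n.choose k : ℝ) * a k * q ^ ((k : ℝ) * x) =
      binomialTransform (-1) (fun k => a k * (q ^ x) ^ k) n := by
  refine sum_congr rfl fun k _ => ?_
  rw [mul_comm (k : ℝ), Real.rpow_mul_natCast hq, mul_assoc]

theorem sum_qb_eq_binomialTransform {q : ℝ} (hq : 0 ≤ q) (hq1 : q ≠ 1) (t : ℕ → ℝ)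
    (n : ℕ) (x : ℝ) :
    ∑ k ∈ range (n + 1), (n.choose k : ℝ) * t k * q ^ ((k : ℝ) * x) * qb q x ^ (n - k) =
      ((q - 1) ^ n)⁻¹ *
        binomialTransform (q ^ x - 1) (fun k => (q - 1) ^ k * t k * (q ^ x) ^ k) n := by
  have hq1' : q - 1 ≠ 0 := sub_ne_zero.mpr hq1
  have hqb : q ^ x - 1 = (q - 1) * qb q x := (mul_div_cancel₀ _ hq1').symm
  simp_rw [hqb, mul_assoc _ (t _), binomialTransform_smul_mul_pow,
    inv_mul_cancel_left₀ (pow_ne_zero n hq1')]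
  refine sum_congr rfl fun k _ => ?_
  rw [mul_comm (k : ℝ), Real.rpow_mul_natCast hq]
  ring

theorem carlitz_type_characterization (q : ℝ) (hq : 0 < q) (hq1 : q ≠ 1)
    (T : ℕ → ℝ → ℝ) :
    (∃ a : ℕ → ℝ, ∀ n : ℕ, ∀ x : ℝ,
        T n x = ((q - 1) ^ n)⁻¹ *
          ∑ k ∈ range (n + 1),
            (-1 : ℝ) ^ (n - k) * (n.choose k : ℝ) * a k * q ^ ((k : ℝ) * x)) ↔
    (∀ n : ℕ, ∀ x : ℝ,
        T n x = ∑ k ∈ range (n + 1),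
          (n.choose k : ℝ) * T k 0 * q ^ ((k : ℝ) * x) * (qb q x) ^ (n - k)) := by
  simp_rw [sum_carlitz_eq_binomialTransform hq.le, sum_qb_eq_binomialTransform hq.le hq1,
    eq_inv_mul_iff_mul_eq₀ (pow_ne_zero _ (sub_ne_zero.mpr hq1))]
  set c : ℕ → ℝ := fun k => (q - 1) ^ k * T k 0
  have key : ∀ n (x : ℝ),
      binomialTransform (-1) (fun k => binomialTransform 1 c k * (q ^ x) ^ k) n =
        binomialTransform (q ^ x - 1) (fun k => c k * (q ^ x) ^ k) n := fun n x => by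
    rw [binomialTransform_binomialTransform_mul_pow, neg_add_eq_sub, one_mul]
  constructor
  · rintro ⟨a, ha⟩ n x
    have hc : binomialTransform (-1) a = c := funext fun n => by
      simpa using (ha n 0).symm
    rw [ha, ← binomialTransform_one_binomialTransform_neg_one a, hc]
    exact key n x
  · exact fun h => ⟨binomialTransform 1 c, fun n x => (h n x).trans (key n x).symm⟩
end

section
/- Let q be a real number with q > 0 and q ≠ 1, let r ≥ 1 and d ≥ 0 be integers with r ≥ d. Define the real sequence b_k := (q−1)^{d−1} · (k·(k−1)⋯(k−d+1)) / [k+r−d] for k ≥ 0, with the convention b_k := 0 when k + r − d = 0 (note that the numerator k·(k−1)⋯(k−d+1) vanishes for k < d when d ≥ 1), and define T_n(x) := (q−1)^{−n} · Σ_{k=0}^{n} (−1)^{n−k} · binom(n,k) · b_k · q^{k·x}. Then for every integer n ≥ d and every integer N ≥ 1, Σ_{k=0}^{N−1} q^{r·k} · [k]^{n−d} = (q^{(r−d)·N} · T_n(N) − T_n(0)) / (n·(n−1)⋯(n−d+1)). -/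
open Finset

/-!
The sequence `S M = q^{(r-d)M} T_n(M)` telescopes. In its forward difference the factor
`q^{k+r-d} - 1 = (q - 1)[k+r-d]` cancels the denominator of `b_k`, leaving
`(q-1)^{d-n} q^{(r-d)M} ∑_k (-1)^{n-k} C(n,k) (k)_d t^k` with `t = q^M`. This alternating sum is
`(n)_d t^d (t-1)^{n-d}` (it is `t^d` times the `d`-th derivative of `(t-1)^n`), so
`S (M+1) - S M = (n)_d q^{rM} [M]^{n-d}`, and summing over `M < N` gives the claim.
-/

theorem descFactorial_mul_choose (n k d : ℕ) (hdk : d ≤ k) :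
    k.descFactorial d * n.choose k = n.descFactorial d * (n - d).choose (k - d) := by
  rw [Nat.descFactorial_eq_factorial_mul_choose, Nat.descFactorial_eq_factorial_mul_choose,
    mul_assoc, mul_assoc, mul_comm (k.choose d), Nat.choose_mul hdk]

theorem prod_range_natCast_sub_eq_descFactorial {R : Type*} [CommRing R] (k d : ℕ) :
    ∏ j ∈ range d, ((k : R) - j) = k.descFactorial d := by
  rw [← descPochhammer_eval_eq_prod_range, descPochhammer_eval_eq_descFactorial]

theorem sum_alternating_choose_mul_descFactorial_mul_pow {R : Type*} [CommRing R] {d n : ℕ}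
    (hdn : d ≤ n) (t : R) :
    ∑ k ∈ range (n + 1), (-1 : R) ^ (n - k) * n.choose k * k.descFactorial d * t ^ k
      = n.descFactorial d * t ^ d * (t - 1) ^ (n - d) := by
  obtain ⟨m, rfl⟩ := Nat.exists_eq_add_of_le hdn
  have hlow : ∀ k ∈ range d,
      (-1 : R) ^ (d + m - k) * (d + m).choose k * k.descFactorial d * t ^ k = 0 := fun k hk => by
    simp [Nat.descFactorial_of_lt (mem_range.1 hk)]
  rw [add_assoc, sum_range_add, sum_eq_zero hlow, zero_add, Nat.add_sub_cancel_left,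
    sub_eq_add_neg, add_pow, mul_sum]
  refine sum_congr rfl fun i _ => ?_
  have hcoeff : ((d + i).descFactorial d : R) * (d + m).choose (d + i)
      = (d + m).descFactorial d * m.choose i := by
    have := descFactorial_mul_choose (d + m) (d + i) d (Nat.le_add_right d i)
    rw [Nat.add_sub_cancel_left, Nat.add_sub_cancel_left] at this
    rw [← Nat.cast_mul, ← Nat.cast_mul, this]
  rw [Nat.add_sub_add_left, pow_add]
  linear_combination ((-1 : R) ^ (m - i) * t ^ d * t ^ i) * hcoeff

theorem qb_natCast (q : ℝ) (n : ℕ) : qb q n = (q ^ n - 1) / (q - 1) := by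
  rw [qb, Real.rpow_natCast]

theorem zpow_sub_one_mul_descFactorial_div_qb_mul {q : ℝ} (hq : 0 < q) (hq1 : q ≠ 1) {r d : ℕ}
    (hr : 1 ≤ r) (k : ℕ) :
    (q - 1) ^ ((d : ℤ) - 1) * k.descFactorial d / qb q ((k + r - d : ℕ) : ℝ)
        * (q ^ (k + r - d) - 1)
      = (q - 1) ^ d * k.descFactorial d := by
  rcases (k + r - d).eq_zero_or_pos with h | h
  -- here `qb q 0 = 0` is divided by, but `r ≥ 1` forces `k < d`, so both sides vanish
  · simp [h, Nat.descFactorial_of_lt (show k < d by omega)]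
  · have hq1' : q - 1 ≠ 0 := sub_ne_zero.2 hq1
    have hpow : q ^ (k + r - d) - 1 ≠ 0 :=
      sub_ne_zero.2 fun h1 => hq1 ((pow_eq_one_iff_of_nonneg hq.le h.ne').1 h1)
    rw [qb_natCast, zpow_sub_one₀ hq1', zpow_natCast]
    field_simp

theorem pow_mul_sub_pow_mul_eq_descFactorial_mul {q : ℝ} (hq1 : q ≠ 1) {r d n : ℕ}
    (hdr : d ≤ r) (hdn : d ≤ n) {b : ℕ → ℝ}
    (hb : ∀ k, b k * (q ^ (k + r - d) - 1) = (q - 1) ^ d * k.descFactorial d) {T : ℝ → ℝ}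
    (hT : ∀ x, T x = ((q - 1) ^ n)⁻¹ *
      ∑ k ∈ range (n + 1), (-1 : ℝ) ^ (n - k) * n.choose k * b k * q ^ ((k : ℝ) * x))
    (M : ℕ) :
    q ^ ((r - d) * (M + 1)) * T (M + 1 : ℕ) - q ^ ((r - d) * M) * T M
      = n.descFactorial d * (q ^ (r * M) * qb q M ^ (n - d)) := by
  obtain ⟨e, rfl⟩ := Nat.exists_eq_add_of_le hdr
  obtain ⟨m, rfl⟩ := Nat.exists_eq_add_of_le hdn
  have hshift : ∀ k, k + (d + e) - d = k + e := fun k => by omega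
  simp only [hshift] at hb
  simp only [Nat.add_sub_cancel_left]
  have hS (L : ℕ) : q ^ (e * L) * T L = ((q - 1) ^ (d + m))⁻¹ *
      ∑ k ∈ range (d + m + 1),
        (-1 : ℝ) ^ (d + m - k) * (d + m).choose k * b k * (q ^ L) ^ (k + e) := by
    rw [hT, mul_left_comm, mul_sum]
    refine congrArg _ (sum_congr rfl fun k _ => ?_)
    rw [← Nat.cast_mul, Real.rpow_natCast]
    ring
  have hterm (k : ℕ) : (-1 : ℝ) ^ (d + m - k) * (d + m).choose k * b k * (q ^ (M + 1)) ^ (k + e)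
      - (-1 : ℝ) ^ (d + m - k) * (d + m).choose k * b k * (q ^ M) ^ (k + e)
      = (q - 1) ^ d * (q ^ M) ^ e *
        ((-1 : ℝ) ^ (d + m - k) * (d + m).choose k * k.descFactorial d * (q ^ M) ^ k) := by
    linear_combination ((-1 : ℝ) ^ (d + m - k) * (d + m).choose k * (q ^ M) ^ (k + e)) * hb k
  rw [hS, hS, ← mul_sub, ← sum_sub_distrib, sum_congr rfl fun k _ => hterm k, ← mul_sum,
    sum_alternating_choose_mul_descFactorial_mul_pow hdn, Nat.add_sub_cancel_left, qb_natCast,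
    div_pow, pow_add (q - 1)]
  have hq1' : q - 1 ≠ 0 := sub_ne_zero.2 hq1
  field_simp
  ring

theorem q_power_sum_closed_form_general (q : ℝ) (hq : 0 < q) (hq1 : q ≠ 1)
    (r d : ℕ) (hr : 1 ≤ r) (hdr : d ≤ r) (b : ℕ → ℝ)
    (hb : ∀ k : ℕ,
      b k = (q - 1) ^ ((d : ℤ) - 1) * (∏ j ∈ range d, ((k : ℝ) - j)) /
        qb q ((k + r - d : ℕ) : ℝ))
    (T : ℕ → ℝ → ℝ)
    (hT : ∀ n : ℕ, ∀ x : ℝ,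
      T n x = ((q - 1) ^ n)⁻¹ *
        ∑ k ∈ range (n + 1),
          (-1 : ℝ) ^ (n - k) * (n.choose k : ℝ) * b k * q ^ ((k : ℝ) * x)) :
    ∀ n N : ℕ, d ≤ n → 1 ≤ N →
      ∑ k ∈ range N, q ^ (r * k) * (qb q k) ^ (n - d)
        = (q ^ ((r - d) * N) * T n (N : ℝ) - T n 0) / ∏ j ∈ range d, ((n : ℝ) - j) := by
  intro n N hdn _
  have hb' (k : ℕ) : b k * (q ^ (k + r - d) - 1) = (q - 1) ^ d * k.descFactorial d := by
    rw [hb, prod_range_natCast_sub_eq_descFactorial]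
    exact zpow_sub_one_mul_descFactorial_div_qb_mul hq hq1 hr k
  have hn : (n.descFactorial d : ℝ) ≠ 0 :=
    Nat.cast_ne_zero.2 fun h => (Nat.descFactorial_eq_zero_iff_lt.1 h).not_ge hdn
  rw [prod_range_natCast_sub_eq_descFactorial, eq_div_iff hn, sum_mul]
  calc ∑ M ∈ range N, q ^ (r * M) * qb q M ^ (n - d) * n.descFactorial d
      = ∑ M ∈ range N,
          (q ^ ((r - d) * (M + 1)) * T n (M + 1 : ℕ) - q ^ ((r - d) * M) * T n M) :=
        sum_congr rfl fun M _ => by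
          rw [pow_mul_sub_pow_mul_eq_descFactorial_mul hq1 hdr hdn hb' (hT n), mul_comm]
    _ = q ^ ((r - d) * N) * T n N - T n 0 := by
        rw [sum_range_sub (fun M => q ^ ((r - d) * M) * T n M)]
        simp
end

section
/- Let q be a real number with q > 0 and q ≠ 1, let r ≥ 0 and d ≥ 0 be integers, and let P be a real polynomial with deg P ≤ d. Let (a_k)_{k≥0} be a real sequence satisfying a_k · [k+r] = P(k) for all integers k ≥ 0, and define t_n := (q−1)^{−n} · Σ_{k=0}^{n} (−1)^{n−k} · binom(n,k) · a_k for n ≥ 0. Then for every integer n > d, q^r · Σ_{k=0}^{n} binom(n,k) · q^k · t_k = t_n. -/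
/-!
Write `Δ` for the forward difference and `E = 1 + Δ` for the shift on sequences, so that
`t k = (q - 1)⁻¹ ^ k * Δ^k a 0`. Then `∑ C(n,k) q^k (q-1)^(n-k) Δ^k = ((q - 1) + qΔ)^n = (qE - 1)^n`,
and `q^r (qE - 1)^n a 0` is `Δ^n b 0` for `b k = q^(k+r) a k`. The hypothesis on `a` says exactly
that `b k - a k = (q - 1) P(k)`, and `Δ^n` annihilates polynomials of degree `< n`; hence
`Δ^n b 0 = Δ^n a 0 = (q - 1)^n t n`.
-/

open Finset

open fwdDiff

theorem fwdDiff_iter_nat_apply_zero {R : Type*} [Ring R] (a : ℕ → R) (n : ℕ) :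
    (Δ_[1])^[n] a 0 = ∑ k ∈ range (n + 1), (-1) ^ (n - k) * (n.choose k : R) * a k := by
  simp [fwdDiff_iter_eq_sum_shift, zsmul_eq_mul]

theorem Polynomial.sum_neg_one_pow_mul_choose_mul_eval_eq_zero {R : Type*} [CommRing R]
    {P : Polynomial R} {n : ℕ} (hP : P.natDegree < n) :
    ∑ k ∈ range (n + 1), (-1) ^ (n - k) * (n.choose k : R) * P.eval (k : R) = 0 := by
  simpa [fwdDiff_iter_eq_sum_shift, zsmul_eq_mul] using
    congr_fun (Polynomial.fwdDiff_iter_eq_zero_of_degree_lt hP) 0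

theorem sum_choose_mul_pow_mul_pow_mul_fwdDiff_iter {R : Type*} [CommRing R]
    (x y : R) (a : ℕ → R) (n : ℕ) :
    ∑ k ∈ range (n + 1), (n.choose k : R) * x ^ k * y ^ (n - k) * (Δ_[1])^[k] a 0 =
      ∑ k ∈ range (n + 1), (n.choose k : R) * x ^ k * (y - x) ^ (n - k) * a k := by
  set E : Module.End R (ℕ → R) := LinearMap.funLeft R R (· + 1)
  have hE : ∀ k (f : ℕ → R) j, (E ^ k) f j = f (j + k) := by
    intro k
    induction k with
    | zero => simp
    | succ k ih => intro f j; rw [pow_succ, Module.End.mul_apply, ih]; rfl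
  have hΔ : ∀ k (f : ℕ → R), ((E - 1) ^ k) f = (Δ_[1])^[k] f := by
    intro k
    induction k with
    | zero => simp
    | succ k ih =>
      intro f
      rw [pow_succ, Module.End.mul_apply, ih, Function.iterate_succ_apply]
      rfl
  have hsplit : x • (E - 1) + y • 1 = x • E + (y - x) • 1 := by module
  have h := congr_fun (LinearMap.congr_fun (congr_arg (· ^ n) hsplit) a) 0
  rw [((Commute.one_right _).smul_right _ |>.smul_left _).add_pow,
    ((Commute.one_right _).smul_right _ |>.smul_left _).add_pow] at h
  simp only [LinearMap.sum_apply, Finset.sum_apply, Module.End.mul_apply, smul_pow, one_pow,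
    Module.End.natCast_apply, LinearMap.smul_apply, Module.End.one_apply, Pi.smul_apply, hE, hΔ,
    fwdDiff_iter_const_smul, zero_add] at h
  simp only [smul_eq_mul, nsmul_eq_mul] at h
  exact (sum_congr rfl fun k _ => by ring).trans (h.trans (sum_congr rfl fun k _ => by ring))

theorem symbolic_formula_for_values_at_zero_general (q : ℝ) (hq1 : q ≠ 1)
    (r d : ℕ) (P : Polynomial ℝ) (hP : P.degree ≤ (d : WithBot ℕ))
    (a : ℕ → ℝ) (ha : ∀ k : ℕ, a k * qb q ((k + r : ℕ) : ℝ) = P.eval (k : ℝ))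
    (t : ℕ → ℝ)
    (ht : ∀ n : ℕ,
      t n = ((q - 1) ^ n)⁻¹ *
        ∑ k ∈ range (n + 1), (-1 : ℝ) ^ (n - k) * (n.choose k : ℝ) * a k) :
    ∀ n : ℕ, d < n →
      q ^ r * ∑ k ∈ range (n + 1), (n.choose k : ℝ) * q ^ k * t k = t n := by
  intro n hn
  have hq : q - 1 ≠ 0 := sub_ne_zero.mpr hq1
  have hPn : P.natDegree < n := (Polynomial.natDegree_le_iff_degree_le.mpr hP).trans_lt hn
  have hshift : ∀ k : ℕ, q ^ r * (q ^ k * a k) = a k + (q - 1) * P.eval (k : ℝ) := fun k => by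
    have := ha k
    rw [qb, Real.rpow_natCast] at this
    field_simp at this
    linear_combination this
  have hsum : ∑ k ∈ range (n + 1), (n.choose k : ℝ) * q ^ k * t k = ((q - 1) ^ n)⁻¹ *
      ∑ k ∈ range (n + 1), (n.choose k : ℝ) * q ^ k * (q - 1) ^ (n - k) * (Δ_[1])^[k] a 0 := by
    rw [mul_sum]
    refine sum_congr rfl fun k hk => ?_
    rw [ht, ← fwdDiff_iter_nat_apply_zero, ← pow_mul_pow_sub (q - 1) (mem_range_succ_iff.mp hk)]
    field_simp
  calc q ^ r * ∑ k ∈ range (n + 1), (n.choose k : ℝ) * q ^ k * t k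
      = ((q - 1) ^ n)⁻¹ *
          ∑ k ∈ range (n + 1), (-1) ^ (n - k) * (n.choose k : ℝ) * (q ^ r * (q ^ k * a k)) := by
        rw [hsum, sum_choose_mul_pow_mul_pow_mul_fwdDiff_iter, sub_sub_cancel_left, mul_sum,
          mul_sum, mul_sum]
        exact sum_congr rfl fun k _ => by ring
    _ = ((q - 1) ^ n)⁻¹ * (∑ k ∈ range (n + 1), (-1) ^ (n - k) * (n.choose k : ℝ) * a k +
          (q - 1) * ∑ k ∈ range (n + 1), (-1) ^ (n - k) * (n.choose k : ℝ) * P.eval (k : ℝ)) := by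
        simp only [hshift, mul_add, sum_add_distrib, mul_sum]
        congr 2 with k
        ring
    _ = t n := by
        rw [P.sum_neg_one_pow_mul_choose_mul_eval_eq_zero hPn, mul_zero, add_zero, ht]

theorem symbolic_formula_for_values_at_zero (q : ℝ) (hq : 0 < q) (hq1 : q ≠ 1)
    (r d : ℕ) (P : Polynomial ℝ) (hP : P.degree ≤ (d : WithBot ℕ))
    (a : ℕ → ℝ) (ha : ∀ k : ℕ, a k * qb q ((k + r : ℕ) : ℝ) = P.eval (k : ℝ))
    (t : ℕ → ℝ)
    (ht : ∀ n : ℕ,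
      t n = ((q - 1) ^ n)⁻¹ *
        ∑ k ∈ range (n + 1), (-1 : ℝ) ^ (n - k) * (n.choose k : ℝ) * a k) :
    ∀ n : ℕ, d < n →
      q ^ r * ∑ k ∈ range (n + 1), (n.choose k : ℝ) * q ^ k * t k = t n :=
  symbolic_formula_for_values_at_zero_general q hq1 r d P hP a ha t ht
end

section
/- Let q be a real number with q > 0 and q ≠ 1, let (a_k)_{k≥0} be a real sequence, and define T_n(x) := (q−1)^{−n} · Σ_{k=0}^{n} (−1)^{n−k} · binom(n,k) · a_k · q^{k·x}. Then for every integer n ≥ 1 and every real x, n · (T_{n−1}(x) + (q−1)·T_n(x)) = (q−1)^{−n} · Σ_{k=0}^{n} (−1)^{n−k} · binom(n,k) · ((q−1)·k·a_k) · q^{k·x}; that is, the sequence (n·(T_{n−1}(x) + (q−1)·T_n(x)))_{n≥0} (with value 0 for n = 0) is Carlitz-type with associated real sequence ((q−1)·k·a_k)_{k≥0}. -/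
open Finset

lemma coeff_id (m k : ℕ) (hk : k ≤ m + 1) :
    ((m : ℝ) + 1) * ((-1) ^ (m - k) * (m.choose k : ℝ)
        + (-1) ^ (m + 1 - k) * ((m + 1).choose k : ℝ))
      = (-1) ^ (m + 1 - k) * (k : ℝ) * ((m + 1).choose k : ℝ) := by
  rcases eq_or_lt_of_le hk with h | h
  · subst h
    simp [Nat.choose_succ_self, Nat.sub_self, show m - (m + 1) = 0 by omega]
  · have hk' : k ≤ m := by omega
    have h1 : m + 1 - k = (m - k) + 1 := by omega
    rw [h1, pow_succ]
    rcases k with _ | j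
    · simp
    · have h2 : ((m + 1).choose (j + 1) : ℝ) = (m.choose j : ℝ) + (m.choose (j + 1) : ℝ) := by
        rw [Nat.choose_succ_succ]
        push_cast
        ring
      have h3 : ((m : ℝ) + 1) * (m.choose j : ℝ)
          = ((j : ℝ) + 1) * ((m + 1).choose (j + 1) : ℝ) := by
        have h := congrArg (Nat.cast : ℕ → ℝ) (Nat.add_one_mul_choose_eq m j)
        push_cast at h
        linarith [h]
      push_cast
      linear_combination ((-1 : ℝ)) ^ (m - (j + 1)) * ((-((m : ℝ) + 1)) * h2 - h3)

theorem carlitz_type_prop_item4 (q : ℝ) (hq : 0 < q) (hq1 : q ≠ 1)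
    (a : ℕ → ℝ) (T : ℕ → ℝ → ℝ)
    (hT : ∀ n : ℕ, ∀ x : ℝ,
      T n x = ((q - 1) ^ n)⁻¹ *
        ∑ k ∈ range (n + 1),
          (-1 : ℝ) ^ (n - k) * (n.choose k : ℝ) * a k * q ^ ((k : ℝ) * x)) :
    ∀ n : ℕ, 1 ≤ n → ∀ x : ℝ,
      (n : ℝ) * (T (n - 1) x + (q - 1) * T n x)
        = ((q - 1) ^ n)⁻¹ *
            ∑ k ∈ range (n + 1),
              (-1 : ℝ) ^ (n - k) * (n.choose k : ℝ) *
                ((q - 1) * (k : ℝ) * a k) * q ^ ((k : ℝ) * x) := by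
  intro n hn x
  obtain ⟨m, rfl⟩ : ∃ m, n = m + 1 := ⟨n - 1, by omega⟩
  have hq0 : q - 1 ≠ 0 := sub_ne_zero.mpr hq1
  rw [hT, hT]
  simp only [Nat.add_sub_cancel]
  -- extend the first sum to range (m+2)
  have hA : (∑ k ∈ range (m + 1 + 1),
        (-1 : ℝ) ^ (m - k) * (m.choose k : ℝ) * a k * q ^ ((k : ℝ) * x))
      = ∑ k ∈ range (m + 1),
        (-1 : ℝ) ^ (m - k) * (m.choose k : ℝ) * a k * q ^ ((k : ℝ) * x) := by
    rw [Finset.sum_range_succ, Nat.choose_succ_self]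
    simp
  rw [← hA]
  have hsum : ((m : ℝ) + 1) *
      ((∑ k ∈ range (m + 1 + 1),
          (-1 : ℝ) ^ (m - k) * (m.choose k : ℝ) * a k * q ^ ((k : ℝ) * x))
        + ∑ k ∈ range (m + 1 + 1),
          (-1 : ℝ) ^ (m + 1 - k) * ((m + 1).choose k : ℝ) * a k * q ^ ((k : ℝ) * x))
      = ∑ k ∈ range (m + 1 + 1),
          (-1 : ℝ) ^ (m + 1 - k) * ((m + 1).choose k : ℝ) * ((k : ℝ) * a k)
            * q ^ ((k : ℝ) * x) := by
    rw [← Finset.sum_add_distrib, Finset.mul_sum]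
    refine Finset.sum_congr rfl fun k hk => ?_
    have hk' : k ≤ m + 1 := by
      simp only [Finset.mem_range] at hk; omega
    have h := coeff_id m k hk'
    linear_combination (a k * q ^ ((k : ℝ) * x)) * h
  have hC : (∑ k ∈ range (m + 1 + 1),
        (-1 : ℝ) ^ (m + 1 - k) * ((m + 1).choose k : ℝ) * ((q - 1) * (k : ℝ) * a k)
          * q ^ ((k : ℝ) * x))
      = (q - 1) * ∑ k ∈ range (m + 1 + 1),
          (-1 : ℝ) ^ (m + 1 - k) * ((m + 1).choose k : ℝ) * ((k : ℝ) * a k)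
            * q ^ ((k : ℝ) * x) := by
    rw [Finset.mul_sum]
    exact Finset.sum_congr rfl fun k _ => by ring
  rw [hC, ← hsum]
  push_cast
  set A := ∑ k ∈ range (m + 1 + 1),
      (-1 : ℝ) ^ (m - k) * (m.choose k : ℝ) * a k * q ^ ((k : ℝ) * x)
  set B := ∑ k ∈ range (m + 1 + 1),
      (-1 : ℝ) ^ (m + 1 - k) * ((m + 1).choose k : ℝ) * a k * q ^ ((k : ℝ) * x)
  have h5 : (q - 1) * ((q - 1) ^ (m + 1))⁻¹ = ((q - 1) ^ m)⁻¹ := by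
    rw [pow_succ]
    field_simp
  calc ((m : ℝ) + 1) * (((q - 1) ^ m)⁻¹ * A + (q - 1) * (((q - 1) ^ (m + 1))⁻¹ * B))
      = ((m : ℝ) + 1) * (((q - 1) ^ m)⁻¹ * A + ((q - 1) * ((q - 1) ^ (m + 1))⁻¹) * B) := by
        ring
    _ = ((m : ℝ) + 1) * (((q - 1) ^ m)⁻¹ * A + ((q - 1) ^ m)⁻¹ * B) := by rw [h5]
    _ = ((q - 1) ^ m)⁻¹ * (((m : ℝ) + 1) * (A + B)) := by ring
    _ = ((q - 1) ^ (m + 1))⁻¹ * ((q - 1) * (((m : ℝ) + 1) * (A + B))) := by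
        rw [pow_succ, mul_inv]
        field_simp
end

section
/- Let q be a real number with q > 0 and q ≠ 1. Then for every integer n ≥ 0 and every real x, β_n(x) = q^{−x} · (η_n(x) + (q−1)·η_{n+1}(x)). -/
open Finset

/-- The Carlitz q-polynomials `η_n(x)`, with the convention `k/[k] = 1` for `k = 0`. -/
noncomputable def carlitzEta (q : ℝ) (n : ℕ) (x : ℝ) : ℝ :=
  ((q - 1) ^ n)⁻¹ *
    ∑ k ∈ range (n + 1),
      (-1 : ℝ) ^ (n - k) * (n.choose k : ℝ) *
        (if k = 0 then 1 else (k : ℝ) / qb q (k : ℝ)) * q ^ ((k : ℝ) * x)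

/-- The Carlitz q-Bernoulli polynomials `β_n(x)`. -/
noncomputable def carlitzBeta (q : ℝ) (n : ℕ) (x : ℝ) : ℝ :=
  ((q - 1) ^ n)⁻¹ *
    ∑ k ∈ range (n + 1),
      (-1 : ℝ) ^ (n - k) * (n.choose k : ℝ) *
        (((k : ℝ) + 1) / qb q ((k : ℝ) + 1)) * q ^ ((k : ℝ) * x)

private 

lemma key (q : ℝ) (hq : 0 < q) (n : ℕ) (x : ℝ) :
    ∑ k ∈ range (n+1), (-1:ℝ)^(n-k) * (n.choose k : ℝ) * (((k:ℝ)+1)/qb q ((k:ℝ)+1)) * q ^ ((k:ℝ)*x)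
    = q ^ (-x) * ((∑ k ∈ range (n+1), (-1:ℝ)^(n-k) * (n.choose k : ℝ) * (if k = 0 then 1 else (k:ℝ)/qb q (k:ℝ)) * q ^ ((k:ℝ)*x))
      + ∑ k ∈ range (n+1+1), (-1:ℝ)^(n+1-k) * ((n+1).choose k : ℝ) * (if k = 0 then 1 else (k:ℝ)/qb q (k:ℝ)) * q ^ ((k:ℝ)*x)) := by
  have h0 : ∑ k ∈ range (n+1), (-1:ℝ)^(n-k) * (n.choose k : ℝ) * (if k = 0 then 1 else (k:ℝ)/qb q (k:ℝ)) * q ^ ((k:ℝ)*x)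
      = ∑ k ∈ range (n+2), (-1:ℝ)^(n-k) * (n.choose k : ℝ) * (if k = 0 then 1 else (k:ℝ)/qb q (k:ℝ)) * q ^ ((k:ℝ)*x) := by
    rw [Finset.sum_range_succ (n := n+1)]
    simp [Nat.choose_succ_self]
  rw [h0, ← Finset.sum_add_distrib, Finset.mul_sum]
  conv_rhs => rw [Finset.sum_range_succ' _ (n+1)]
  have hz : q ^ (-x) * ((-1:ℝ)^(n-0) * (n.choose 0 : ℝ) * (if (0:ℕ) = 0 then 1 else ((0:ℕ):ℝ)/qb q ((0:ℕ):ℝ)) * q ^ (((0:ℕ):ℝ)*x)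
      + (-1:ℝ)^(n+1-0) * ((n+1).choose 0 : ℝ) * (if (0:ℕ) = 0 then 1 else ((0:ℕ):ℝ)/qb q ((0:ℕ):ℝ)) * q ^ (((0:ℕ):ℝ)*x)) = 0 := by
    simp [pow_succ]
  rw [hz, add_zero]
  symm
  apply Finset.sum_congr rfl
  intro j hj
  have hj' : j ≤ n := by simpa [Nat.lt_succ_iff] using hj
  have hr : q ^ (-x) * q ^ (((j:ℝ)+1)*x) = q ^ ((j:ℝ)*x) := by
    rw [← Real.rpow_add hq]; congr 1; ring
  have hcoef : (-1:ℝ)^(n-(j+1)) * (n.choose (j+1) : ℝ) + (-1:ℝ)^(n-j) * ((n+1).choose (j+1) : ℝ)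
      = (-1:ℝ)^(n-j) * (n.choose j : ℝ) := by
    rw [Nat.choose_succ_succ]
    push_cast
    rcases eq_or_lt_of_le hj' with h | h
    · subst h; simp [Nat.choose_succ_self]
    · have h2 : n - j = (n - (j+1)) + 1 := by omega
      rw [h2, pow_succ]; ring
  have hs : n + 1 - (j+1) = n - j := by omega
  simp only [hs, Nat.succ_ne_zero, if_false, Nat.cast_succ]
  linear_combination ((((j:ℝ)+1)/qb q ((j:ℝ)+1)) * (q ^ (-x) * q ^ (((j:ℝ)+1)*x))) * hcoef
    + ((-1:ℝ)^(n-j) * (n.choose j : ℝ) * (((j:ℝ)+1)/qb q ((j:ℝ)+1))) * hr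

theorem beta_eq_eta_combination (q : ℝ) (hq : 0 < q) (hq1 : q ≠ 1) :
    ∀ n : ℕ, ∀ x : ℝ,
      carlitzBeta q n x
        = q ^ (-x) * (carlitzEta q n x + (q - 1) * carlitzEta q (n + 1) x) := by
  intro n x
  have hc : q - 1 ≠ 0 := sub_ne_zero.mpr hq1
  unfold carlitzBeta carlitzEta
  rw [key q hq n x]
  have h1 : ((q-1) ^ (n+1))⁻¹ = ((q-1) ^ n)⁻¹ * (q-1)⁻¹ := by rw [pow_succ, mul_inv]
  rw [h1]
  field_simp
end

section
/- Let q be a real number with q > 0 and q ≠ 1. Then for all integers n ≥ 1 and N ≥ 1, Σ_{k=0}^{N−1} q^k · [k]^{n−1} = (η_n(N) − η_n(0)) / n. -/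
open Finset

theorem q_power_sum_via_eta (q : ℝ) (hq : 0 < q) (hq1 : q ≠ 1) :
    ∀ n N : ℕ, 1 ≤ n → 1 ≤ N →
      ∑ k ∈ range N, q ^ k * (qb q k) ^ (n - 1)
        = (carlitzEta q n (N : ℝ) - carlitzEta q n 0) / (n : ℝ) := by
  intro n N hn _hN
  obtain ⟨m, rfl⟩ : ∃ m, n = m + 1 := ⟨n - 1, (Nat.succ_pred_eq_of_pos hn).symm⟩
  have hsub : q - 1 ≠ 0 := sub_ne_zero.mpr hq1
  have hpow : ∀ k : ℕ, q ^ (k + 1) ≠ 1 := by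
    intro k h
    rcases lt_or_gt_of_ne hq1 with h1 | h1
    · have : q ^ (k + 1) < 1 := pow_lt_one₀ hq.le h1 (Nat.succ_ne_zero k)
      linarith
    · have : 1 < q ^ (k + 1) := one_lt_pow₀ h1 (Nat.succ_ne_zero k)
      linarith
  have hpow' : ∀ k : ℕ, q ^ (k + 1) - 1 ≠ 0 := fun k => sub_ne_zero.mpr (hpow k)
  have hqb : ∀ j : ℕ, qb q (j : ℝ) = (q ^ j - 1) / (q - 1) := by
    intro j; simp [qb, Real.rpow_natCast]
  set S : ℝ := ∑ k ∈ range (m + 1),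
      (-1 : ℝ) ^ (m - k) * (m.choose k : ℝ) * (((q ^ (k + 1)) ^ N - 1) / (q ^ (k + 1) - 1))
    with hS
  have hm1 : ((m : ℝ) + 1) ≠ 0 := by positivity
  -- LHS
  have hLHS : ∑ j ∈ range N, q ^ j * (qb q (j : ℝ)) ^ m = ((q - 1) ^ m)⁻¹ * S := by
    have step : ∀ j : ℕ, q ^ j * (qb q (j : ℝ)) ^ m
        = ∑ k ∈ range (m + 1), ((q - 1) ^ m)⁻¹ *
            ((-1 : ℝ) ^ (m - k) * (m.choose k : ℝ) * (q ^ (k + 1)) ^ j) := by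
      intro j
      rw [hqb, div_pow]
      have hexp : (q ^ j - 1) ^ m
          = ∑ k ∈ range (m + 1), (q ^ j) ^ k * (-1 : ℝ) ^ (m - k) * (m.choose k : ℝ) := by
        have := add_pow (q ^ j) (-1 : ℝ) m
        simpa [sub_eq_add_neg] using this
      rw [hexp, Finset.sum_div, Finset.mul_sum]
      refine Finset.sum_congr rfl fun k _ => ?_
      have hpp : q ^ j * (q ^ j) ^ k = (q ^ (k + 1)) ^ j := by
        rw [← pow_succ', ← pow_mul, ← pow_mul, mul_comm]
      rw [← hpp, div_eq_mul_inv]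
      ring
    calc ∑ j ∈ range N, q ^ j * (qb q (j : ℝ)) ^ m
        = ∑ j ∈ range N, ∑ k ∈ range (m + 1), ((q - 1) ^ m)⁻¹ *
            ((-1 : ℝ) ^ (m - k) * (m.choose k : ℝ) * (q ^ (k + 1)) ^ j) :=
          Finset.sum_congr rfl fun j _ => step j
      _ = ∑ k ∈ range (m + 1), ∑ j ∈ range N, ((q - 1) ^ m)⁻¹ *
            ((-1 : ℝ) ^ (m - k) * (m.choose k : ℝ) * (q ^ (k + 1)) ^ j) := Finset.sum_comm
      _ = ((q - 1) ^ m)⁻¹ * S := by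
          rw [hS, Finset.mul_sum]
          refine Finset.sum_congr rfl fun k _ => ?_
          rw [← geom_sum_eq (hpow k) N, Finset.mul_sum, Finset.mul_sum]
  -- key form of eta
  have key : ∀ x : ℕ, carlitzEta q (m + 1) (x : ℝ) =
      ((q - 1) ^ (m + 1))⁻¹ * ∑ k ∈ range (m + 2),
        (-1 : ℝ) ^ (m + 1 - k) * ((m + 1).choose k : ℝ) *
          (if k = 0 then 1 else (k : ℝ) / qb q (k : ℝ)) * (q ^ k) ^ x := by
    intro x
    unfold carlitzEta
    congr 1
    refine Finset.sum_congr rfl fun k _ => ?_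
    congr 1
    have hc : ((k : ℝ) * (x : ℝ)) = ((k * x : ℕ) : ℝ) := by push_cast; ring
    rw [hc, Real.rpow_natCast, pow_mul]
  have hdiff : carlitzEta q (m + 1) (N : ℝ) - carlitzEta q (m + 1) 0
      = ((q - 1) ^ (m + 1))⁻¹ * ∑ k ∈ range (m + 1),
          ((m : ℝ) + 1) * ((-1 : ℝ) ^ (m - k) * (m.choose k : ℝ) * (q - 1) *
            (((q ^ (k + 1)) ^ N - 1) / (q ^ (k + 1) - 1))) := by
    have h0 : carlitzEta q (m + 1) (0 : ℝ) = carlitzEta q (m + 1) ((0 : ℕ) : ℝ) := by norm_num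
    rw [key N, h0, key 0, ← mul_sub, ← Finset.sum_sub_distrib]
    congr 1
    rw [Finset.sum_range_succ']
    have hz : ((-1 : ℝ) ^ (m + 1 - 0) * ((m + 1).choose 0 : ℝ) *
        (if (0 : ℕ) = 0 then (1:ℝ) else ((0:ℕ) : ℝ) / qb q ((0:ℕ) : ℝ)) * (q ^ (0:ℕ)) ^ N -
        (-1 : ℝ) ^ (m + 1 - 0) * ((m + 1).choose 0 : ℝ) *
        (if (0 : ℕ) = 0 then (1:ℝ) else ((0:ℕ) : ℝ) / qb q ((0:ℕ) : ℝ)) * (q ^ (0:ℕ)) ^ 0) = 0 := by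
      simp
    rw [hz, add_zero]
    refine Finset.sum_congr rfl fun k hk => ?_
    have h2 : (m + 1) * m.choose k = (m + 1).choose (k + 1) * (k + 1) :=
      Nat.add_one_mul_choose_eq m k
    have h2' := congrArg (Nat.cast (R := ℝ)) h2
    push_cast at h2'
    have hk1 : ((k : ℝ) + 1) ≠ 0 := by positivity
    have hC : (((m + 1).choose (k + 1) : ℕ) : ℝ)
        = ((m : ℝ) + 1) * (m.choose k : ℝ) / ((k : ℝ) + 1) := by
      rw [eq_div_iff hk1]; linarith [h2']
    have h3 := hpow' k
    simp only [Nat.succ_ne_zero, if_false, hqb, Nat.succ_sub_succ, pow_zero]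
    push_cast
    rw [hC]
    field_simp
  rw [show m + 1 - 1 = m from rfl, hLHS, hdiff]
  rw [Finset.mul_sum, Finset.mul_sum, Finset.sum_div]
  refine Finset.sum_congr rfl fun k _ => ?_
  have h3 := hpow' k
  rw [pow_succ (q - 1) m]
  push_cast
  field_simp
end

section
/- Let q be a real number with q > 0 and q ≠ 1. Define the doubly indexed family of functions β_n^{(r)} : ℝ → ℝ recursively by β_n^{(0)}(x) := η_n(x) for all n ≥ 0, and β_n^{(r+1)}(x) := q^{−x} · (β_n^{(r)}(x) + (q−1)·β_{n+1}^{(r)}(x)) for all r ≥ 0 and n ≥ 0. Then for all integers r ≥ 0 and n ≥ 0 and all real x, β_n^{(r)}(x) = (q−1)^{−n} · Σ_{k=0}^{n} (−1)^{n−k} · binom(n,k) · ((k+r)/[k+r]) · q^{k·x}, with the convention (k+r)/[k+r] := 1 when k + r = 0. -/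
open Finset

lemma sign_split (n : ℕ) (g : ℕ → ℝ) :
    ∑ k ∈ range (n+1), (-1:ℝ)^(n-k) * g k
      = (-1:ℝ)^n * ∑ k ∈ range (n+1), (-1:ℝ)^k * g k := by
  rw [Finset.mul_sum]
  refine Finset.sum_congr rfl fun k hk => ?_
  have hkn : k ≤ n := Nat.lt_succ_iff.mp (Finset.mem_range.mp hk)
  have h : n - k + k = n := by omega
  have hs' : (-1:ℝ)^(n-k) * (-1)^k = (-1)^n := by rw [← pow_add, h]
  have he : ((-1:ℝ)^k) * (-1)^k = 1 := by
    rw [← pow_add]; exact Even.neg_one_pow ⟨k, rfl⟩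
  linear_combination (g k * (-1:ℝ)^k) * hs' - (g k * (-1:ℝ)^(n-k)) * he

lemma key_sum (w : ℝ) (a : ℕ → ℝ) (n : ℕ) :
    ∑ k ∈ range (n+2), (-1:ℝ)^k * ((n+1).choose k : ℝ) * (a k * w^k)
      = ∑ k ∈ range (n+1), (-1:ℝ)^k * (n.choose k : ℝ) * (a k * w^k)
        - w * ∑ k ∈ range (n+1), (-1:ℝ)^k * (n.choose k : ℝ) * (a (k+1) * w^k) := by
  rw [Finset.sum_range_succ' _ (n+1)]
  have hT : ∑ k ∈ range (n+1), (-1:ℝ)^k * (n.choose k : ℝ) * (a k * w^k)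
      = a 0 + ∑ k ∈ range n, (-1:ℝ)^(k+1) * (n.choose (k+1) : ℝ) * (a (k+1) * w^(k+1)) := by
    rw [Finset.sum_range_succ' _ n]
    simp [add_comm]
  rw [hT]
  have h1 : ∑ k ∈ range (n+1), (-1:ℝ)^(k+1) * ((n+1).choose (k+1) : ℝ) * (a (k+1) * w^(k+1))
      = ∑ k ∈ range (n+1), ((-1:ℝ)^(k+1) * (n.choose k : ℝ) * (a (k+1) * w^(k+1))
          + (-1:ℝ)^(k+1) * (n.choose (k+1) : ℝ) * (a (k+1) * w^(k+1))) := by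
    refine Finset.sum_congr rfl fun k _ => ?_
    rw [Nat.choose_succ_succ]; push_cast; ring
  rw [h1, Finset.sum_add_distrib]
  have h2 : ∑ k ∈ range (n+1), (-1:ℝ)^(k+1) * (n.choose (k+1) : ℝ) * (a (k+1) * w^(k+1))
      = ∑ k ∈ range n, (-1:ℝ)^(k+1) * (n.choose (k+1) : ℝ) * (a (k+1) * w^(k+1)) := by
    rw [Finset.sum_range_succ]
    simp [Nat.choose_succ_self]
  rw [h2]
  have h3 : w * ∑ k ∈ range (n+1), (-1:ℝ)^k * (n.choose k : ℝ) * (a (k+1) * w^k)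
      = ∑ k ∈ range (n+1), (-1:ℝ)^k * (n.choose k : ℝ) * (a (k+1) * w^(k+1)) := by
    rw [Finset.mul_sum]; exact Finset.sum_congr rfl fun k _ => by ring
  rw [h3]
  have h4 : ∑ k ∈ range (n+1), (-1:ℝ)^(k+1) * (n.choose k : ℝ) * (a (k+1) * w^(k+1))
      = - ∑ k ∈ range (n+1), (-1:ℝ)^k * (n.choose k : ℝ) * (a (k+1) * w^(k+1)) := by
    rw [← Finset.sum_neg_distrib]; exact Finset.sum_congr rfl fun k _ => by ring
  rw [h4]
  simp
  ring

theorem extended_beta_explicit_formula (q : ℝ) (hq : 0 < q) (hq1 : q ≠ 1)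
    (B : ℕ → ℕ → ℝ → ℝ)
    (hB0 : ∀ n : ℕ, ∀ x : ℝ, B 0 n x = carlitzEta q n x)
    (hBsucc : ∀ r n : ℕ, ∀ x : ℝ,
      B (r + 1) n x = q ^ (-x) * (B r n x + (q - 1) * B r (n + 1) x)) :
    ∀ r n : ℕ, ∀ x : ℝ,
      B r n x = ((q - 1) ^ n)⁻¹ *
        ∑ k ∈ range (n + 1),
          (-1 : ℝ) ^ (n - k) * (n.choose k : ℝ) *
            (if k + r = 0 then 1 else ((k + r : ℕ) : ℝ) / qb q ((k + r : ℕ) : ℝ)) *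
            q ^ ((k : ℝ) * x) := by
  intro r
  induction r with
  | zero =>
    intro n x
    rw [hB0, carlitzEta]
    simp
  | succ r ih =>
    intro n x
    rw [hBsucc, ih n x, ih (n+1) x]
    set w := q ^ x with hw
    have hw0 : (0:ℝ) < w := Real.rpow_pos_of_pos hq x
    have hqx : ∀ k : ℕ, q ^ ((k:ℝ) * x) = w ^ k := by
      intro k
      rw [mul_comm, Real.rpow_mul hq.le, hw, Real.rpow_natCast]
    have hq1' : q - 1 ≠ 0 := sub_ne_zero.mpr hq1
    have hneg : q ^ (-x) = w⁻¹ := by rw [Real.rpow_neg hq.le, hw]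
    have reshape : ∀ s m : ℕ,
        (∑ k ∈ range (m+1), (-1:ℝ)^(m-k) * (m.choose k : ℝ) *
            (if k+s=0 then 1 else ((k+s:ℕ):ℝ)/qb q ((k+s:ℕ):ℝ)) * q^((k:ℝ)*x))
        = (-1:ℝ)^m * ∑ k ∈ range (m+1), (-1:ℝ)^k * (m.choose k : ℝ) *
            ((if k+s=0 then (1:ℝ) else ((k+s:ℕ):ℝ)/qb q ((k+s:ℕ):ℝ)) * w^k) := by
      intro s m
      have step1 : (∑ k ∈ range (m+1), (-1:ℝ)^(m-k) * (m.choose k : ℝ) *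
            (if k+s=0 then 1 else ((k+s:ℕ):ℝ)/qb q ((k+s:ℕ):ℝ)) * q^((k:ℝ)*x))
          = ∑ k ∈ range (m+1), (-1:ℝ)^(m-k) * ((m.choose k : ℝ) *
            ((if k+s=0 then (1:ℝ) else ((k+s:ℕ):ℝ)/qb q ((k+s:ℕ):ℝ)) * w^k)) := by
        refine Finset.sum_congr rfl fun k _ => ?_
        rw [hqx k]; ring
      rw [step1, sign_split m (fun k => (m.choose k : ℝ) *
          ((if k+s=0 then (1:ℝ) else ((k+s:ℕ):ℝ)/qb q ((k+s:ℕ):ℝ)) * w^k))]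
      congr 1
      exact Finset.sum_congr rfl fun k _ => (mul_assoc _ _ _).symm
    rw [reshape r n, reshape r (n+1), reshape (r+1) n, hneg]
    have ha : ∀ k : ℕ, (if k+(r+1)=0 then (1:ℝ) else ((k+(r+1):ℕ):ℝ)/qb q ((k+(r+1):ℕ):ℝ))
        = (if (k+1)+r=0 then (1:ℝ) else (((k+1)+r:ℕ):ℝ)/qb q (((k+1)+r:ℕ):ℝ)) := by
      intro k
      have h : k + (r+1) = (k+1) + r := by omega
      rw [h]
    have hsum3 : ∑ k ∈ range (n+1), (-1:ℝ)^k * (n.choose k : ℝ) *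
          ((if k+(r+1)=0 then (1:ℝ) else ((k+(r+1):ℕ):ℝ)/qb q ((k+(r+1):ℕ):ℝ)) * w^k)
        = ∑ k ∈ range (n+1), (-1:ℝ)^k * (n.choose k : ℝ) *
          ((if (k+1)+r=0 then (1:ℝ) else (((k+1)+r:ℕ):ℝ)/qb q (((k+1)+r:ℕ):ℝ)) * w^k) := by
      refine Finset.sum_congr rfl fun k _ => ?_
      rw [ha k]
    rw [hsum3]
    rw [key_sum w (fun k => if k+r=0 then (1:ℝ) else ((k+r:ℕ):ℝ)/qb q ((k+r:ℕ):ℝ)) n]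
    field_simp
    ring
end

section
/- Let q be a real number with q > 0 and q ≠ 1, and let r ≥ 0 be an integer. Then for every integer n ≥ 2, q^r · Σ_{k=0}^{n} binom(n,k) · q^k · β_k^{(r)} = β_n^{(r)}. -/
/-!
Write `F j = (j+r)/[j+r]` and let `L` be the linear functional on `ℝ[X]` with `L (X ^ j) = F j`.
Then `β_n = L ((X - 1) ^ n) / (q - 1) ^ n`, and the binomial theorem turns the left-hand side
`(q β + 1) ^ n` into `L ((q X - 1) ^ n) / (q - 1) ^ n`. Multiplying by `q ^ r` replaces `F j` by
`q ^ (j + r) F j = F j + (q - 1) (j + r)`, and the second summand contributes the `n`-th finite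
difference of a linear function, which vanishes for `n ≥ 2`.
-/

open Finset

/-- The extended Carlitz q-Bernoulli numbers of order `r`, with the convention
`(k+r)/[k+r] = 1` when `k + r = 0`. -/
noncomputable def extBetaNum (q : ℝ) (r n : ℕ) : ℝ :=
  ((q - 1) ^ n)⁻¹ *
    ∑ k ∈ range (n + 1),
      (-1 : ℝ) ^ (n - k) * (n.choose k : ℝ) *
        (if k + r = 0 then 1 else ((k + r : ℕ) : ℝ) / qb q ((k + r : ℕ) : ℝ))

open Polynomial

section Umbral

variable {R : Type*} [CommRing R]

/-- The paper's symbolic notation: `umbralEval f` replaces each power `X ^ j` by `f j`. -/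
noncomputable def umbralEval (f : ℕ → R) : R[X] →ₗ[R] R :=
  lsum fun j => LinearMap.smulRight LinearMap.id (f j)

@[simp]
lemma umbralEval_monomial (f : ℕ → R) (j : ℕ) (a : R) :
    umbralEval f (monomial j a) = a * f j := by
  simp [umbralEval]

lemma umbralEval_C_mul_X_add_C_pow (f : ℕ → R) (a b : R) (n : ℕ) :
    umbralEval f ((C a * X + C b) ^ n) =
      ∑ j ∈ range (n + 1), n.choose j * a ^ j * b ^ (n - j) * f j := by
  rw [add_pow, map_sum]
  refine sum_congr rfl fun j _ => ?_
  have : (C a * X) ^ j * C b ^ (n - j) * (n.choose j : R[X]) =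
      C (n.choose j * a ^ j * b ^ (n - j)) * X ^ j := by
    simp only [mul_pow, map_mul, map_pow, map_natCast]; ring
  rw [this, C_mul_X_pow_eq_monomial, umbralEval_monomial]

lemma umbralEval_comp_C_mul_X (f : ℕ → R) (a : R) (p : R[X]) :
    umbralEval f (p.comp (C a * X)) = umbralEval (fun j => a ^ j * f j) p := by
  induction p using Polynomial.induction_on' with
  | add p q hp hq => simp only [add_comp, map_add, hp, hq]
  | monomial j b =>
    rw [monomial_comp, mul_pow, ← C_pow, ← mul_assoc, ← C_mul, X_pow_eq_monomial,
      C_mul_monomial]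
    simp only [umbralEval_monomial, mul_one]
    ring

lemma umbralEval_add (f g : ℕ → R) (p : R[X]) :
    umbralEval (f + g) p = umbralEval f p + umbralEval g p := by
  induction p using Polynomial.induction_on' with
  | add p q hp hq => simp only [map_add, hp, hq]; ring
  | monomial j b => simp only [umbralEval_monomial, Pi.add_apply]; ring

lemma umbralEval_smul (c : R) (f : ℕ → R) (p : R[X]) :
    umbralEval (c • f) p = c * umbralEval f p := by
  induction p using Polynomial.induction_on' with
  | add p q hp hq => simp only [map_add, hp, hq]; ring
  | monomial j b => simp only [umbralEval_monomial, Pi.smul_apply, smul_eq_mul]; ring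

lemma umbralEval_const (c : R) (p : R[X]) : umbralEval (fun _ => c) p = p.eval 1 * c := by
  induction p using Polynomial.induction_on' with
  | add p q hp hq => simp only [map_add, hp, hq, eval_add, add_mul]
  | monomial j b => simp

lemma umbralEval_natCast (p : R[X]) : umbralEval (fun j => (j : R)) p = (derivative p).eval 1 := by
  induction p using Polynomial.induction_on' with
  | add p q hp hq => simp only [map_add, hp, hq, eval_add]
  | monomial j b => simp [derivative_monomial]

lemma sum_choose_mul_pow_mul_umbralEval (f : ℕ → R) (c : R) (n : ℕ) :
    ∑ k ∈ range (n + 1), n.choose k * c ^ k * umbralEval f ((X - 1) ^ k) =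
      umbralEval f ((C c * X + C (1 - c)) ^ n) := by
  have : C c * X + C (1 - c) = C c * (X - 1) + 1 := by simp only [C_sub, C_1]; ring
  rw [this, add_pow, map_sum]
  refine sum_congr rfl fun k _ => ?_
  have : (C c * (X - 1)) ^ k * 1 ^ (n - k) * (n.choose k : R[X]) =
      C (n.choose k * c ^ k) * (X - 1) ^ k := by
    simp only [mul_pow, map_mul, map_pow, map_natCast]; ring
  rw [this, C_mul', map_smul, smul_eq_mul]

lemma umbralEval_natCast_add_const_X_sub_one_pow (c : R) {n : ℕ} (hn : 2 ≤ n) :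
    umbralEval (fun j => (j : R) + c) ((X - 1) ^ n) = 0 := by
  change umbralEval ((fun j : ℕ => (j : R)) + fun _ => c) ((X - 1 : R[X]) ^ n) = 0
  rw [umbralEval_add, umbralEval_natCast, umbralEval_const]
  simp [derivative_pow, show n - 1 ≠ 0 by omega, show n ≠ 0 by omega]

end Umbral

noncomputable def bracketRatio (q : ℝ) (m : ℕ) : ℝ :=
  if m = 0 then 1 else (m : ℝ) / qb q m

lemma pow_mul_bracketRatio {q : ℝ} (hq : 0 < q) (hq1 : q ≠ 1) (m : ℕ) :
    q ^ m * bracketRatio q m = bracketRatio q m + (q - 1) * m := by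
  rcases eq_or_ne m 0 with rfl | hm
  · simp [bracketRatio]
  have hqm : q ^ m - 1 ≠ 0 :=
    sub_ne_zero.mpr fun h => hq1 ((pow_eq_one_iff_of_nonneg hq.le hm).mp h)
  have hq1' : q - 1 ≠ 0 := sub_ne_zero.mpr hq1
  rw [bracketRatio, if_neg hm, qb, Real.rpow_natCast]
  field_simp
  ring

lemma extBetaNum_eq_umbralEval (q : ℝ) (r n : ℕ) :
    extBetaNum q r n =
      ((q - 1) ^ n)⁻¹ * umbralEval (fun j => bracketRatio q (j + r)) ((X - 1) ^ n) := by
  rw [show (X - 1 : ℝ[X]) = C 1 * X + C (-1) by simp [sub_eq_add_neg],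
    umbralEval_C_mul_X_add_C_pow, extBetaNum]
  congr 1
  refine sum_congr rfl fun k _ => ?_
  simp only [bracketRatio, one_pow, mul_one]
  ring

lemma sum_choose_mul_pow_mul_extBetaNum {q : ℝ} (hq1 : q ≠ 1) (r n : ℕ) :
    ∑ k ∈ range (n + 1), (n.choose k : ℝ) * q ^ k * extBetaNum q r k =
      ((q - 1) ^ n)⁻¹ * umbralEval (fun j => bracketRatio q (j + r)) ((C q * X - 1) ^ n) := by
  have hq1' : q - 1 ≠ 0 := sub_ne_zero.mpr hq1
  have hlin : C (q / (q - 1)) * X + C (1 - q / (q - 1)) = C (q - 1)⁻¹ * (C q * X - 1) := by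
    rw [show 1 - q / (q - 1) = -(q - 1)⁻¹ by field_simp; ring, div_eq_mul_inv]
    simp only [map_mul, map_neg]
    ring
  have hterm : ∀ k, (n.choose k : ℝ) * q ^ k * extBetaNum q r k =
      n.choose k * (q / (q - 1)) ^ k *
        umbralEval (fun j => bracketRatio q (j + r)) ((X - 1) ^ k) := by
    intro k
    rw [extBetaNum_eq_umbralEval, div_pow, div_eq_mul_inv]
    ring
  rw [sum_congr rfl fun k _ => hterm k, sum_choose_mul_pow_mul_umbralEval, hlin, mul_pow, ← C_pow,
    C_mul', map_smul, smul_eq_mul, inv_pow]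

theorem extended_beta_symbolic_formula (q : ℝ) (hq : 0 < q) (hq1 : q ≠ 1) (r : ℕ) :
    ∀ n : ℕ, 2 ≤ n →
      q ^ r * ∑ k ∈ range (n + 1), (n.choose k : ℝ) * q ^ k * extBetaNum q r k
        = extBetaNum q r n := by
  intro n hn
  set F : ℕ → ℝ := fun j => bracketRatio q (j + r)
  have hweight :
      q ^ r • (fun j => q ^ j * F j) = F + (q - 1) • fun j : ℕ => (j : ℝ) + r := by
    funext j
    simp only [F, Pi.smul_apply, Pi.add_apply, smul_eq_mul, ← mul_assoc, ← pow_add, add_comm r,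
      pow_mul_bracketRatio hq hq1]
    push_cast
    ring
  calc q ^ r * ∑ k ∈ range (n + 1), (n.choose k : ℝ) * q ^ k * extBetaNum q r k
      = ((q - 1) ^ n)⁻¹ * (q ^ r * umbralEval F ((C q * X - 1) ^ n)) := by
        rw [sum_choose_mul_pow_mul_extBetaNum hq1, mul_left_comm]
    _ = ((q - 1) ^ n)⁻¹ * umbralEval (q ^ r • fun j => q ^ j * F j) ((X - 1) ^ n) := by
        rw [show (C q * X - 1 : ℝ[X]) ^ n = ((X - 1 : ℝ[X]) ^ n).comp (C q * X) by simp,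
          umbralEval_comp_C_mul_X, umbralEval_smul]
    _ = ((q - 1) ^ n)⁻¹ * (umbralEval F ((X - 1) ^ n) +
          (q - 1) * umbralEval (fun j => (j : ℝ) + r) ((X - 1) ^ n)) := by
        rw [hweight, umbralEval_add, umbralEval_smul]
    _ = extBetaNum q r n := by
        rw [umbralEval_natCast_add_const_X_sub_one_pow _ hn, mul_zero, add_zero,
          extBetaNum_eq_umbralEval]
end

section
/- Let q be a real number with q > 0 and q ≠ 1, and let r ≥ 0 be an integer. Then for all integers n ≥ 1 and N ≥ 1, n · Σ_{k=0}^{N−1} q^{(r+1)·k} · [k]^{n−1} + (q−1) · r · Σ_{k=0}^{N−1} q^{r·k} · [k]^n = q^{r·N} · β_n^{(r)}(N) − β_n^{(r)}(0). -/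
/-!
Writing `t = q ^ x`, the function `(q - 1) ^ n * β_n^{(r)}(x)` is a polynomial
`P(t) = ∑ (-1)^(n-k) C(n,k) c_{k+r} t^k` whose weights `c_m = m / [m]` satisfy
`c_m (q^m - 1) = m (q - 1)`. Hence `q^r P(q t) - P(t) = (q - 1) ∑ (-1)^(n-k) C(n,k) (k + r) t^k`,
and the alternating binomial sums evaluate this to `(q - 1) (n t (t - 1)^(n-1) + r (t - 1)^n)`.
At `t = q^N`, multiplied by `q^(rN) / (q - 1)^n`, this is the `N`-th summand of the left-hand
side, so the sum telescopes.
-/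

open Finset

/-- The extended Carlitz q-Bernoulli polynomials of order `r`, with the convention
`(k+r)/[k+r] = 1` when `k + r = 0`. -/
noncomputable def extBeta (q : ℝ) (r n : ℕ) (x : ℝ) : ℝ :=
  ((q - 1) ^ n)⁻¹ *
    ∑ k ∈ range (n + 1),
      (-1 : ℝ) ^ (n - k) * (n.choose k : ℝ) *
        (if k + r = 0 then 1 else ((k + r : ℕ) : ℝ) / qb q ((k + r : ℕ) : ℝ)) *
        q ^ ((k : ℝ) * x)

section AlternatingBinomial

variable {R : Type*} [CommRing R]

theorem sum_neg_one_pow_choose_mul_pow (n : ℕ) (t : R) :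
    ∑ k ∈ range (n + 1), (-1) ^ (n - k) * (n.choose k : R) * t ^ k = (t - 1) ^ n := by
  rw [sub_eq_add_neg, add_pow]
  exact sum_congr rfl fun k _ => by ring

theorem sum_neg_one_pow_choose_mul_cast_mul_pow (n : ℕ) (t : R) :
    ∑ k ∈ range (n + 1), (-1) ^ (n - k) * (n.choose k : R) * k * t ^ k
      = n * t * (t - 1) ^ (n - 1) := by
  cases n with
  | zero => simp
  | succ m =>
    have shift : ∀ k ∈ range (m + 1),
        (-1) ^ (m + 1 - (k + 1)) * ((m + 1).choose (k + 1) : R) * ((k + 1 : ℕ) : R) * t ^ (k + 1)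
          = (m + 1 : ℕ) * t * ((-1) ^ (m - k) * (m.choose k : R) * t ^ k) := by
      intro k _
      have h := congrArg (Nat.cast : ℕ → R) (Nat.add_one_mul_choose_eq m k)
      push_cast at h ⊢
      linear_combination (-(-1) ^ (m - k) * t ^ (k + 1)) * h
    rw [sum_range_succ', sum_congr rfl shift, ← mul_sum, sum_neg_one_pow_choose_mul_pow,
      Nat.add_sub_cancel]
    simp

theorem sum_neg_one_pow_choose_mul_add_mul_pow (n : ℕ) (a t : R) :
    ∑ k ∈ range (n + 1), (-1) ^ (n - k) * (n.choose k : R) * (k + a) * t ^ k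
      = n * t * (t - 1) ^ (n - 1) + a * (t - 1) ^ n := by
  rw [← sum_neg_one_pow_choose_mul_cast_mul_pow, ← sum_neg_one_pow_choose_mul_pow, mul_sum,
    ← sum_add_distrib]
  exact sum_congr rfl fun k _ => by ring

end AlternatingBinomial

/-- The factor `(k + r) / [k + r]` of `extBeta`, as a function of `m = k + r`. -/
noncomputable def carlitzWeight (q : ℝ) (m : ℕ) : ℝ :=
  if m = 0 then 1 else (m : ℝ) / qb q (m : ℝ)

theorem carlitzWeight_mul_pow_sub_one {q : ℝ} (hq : 0 ≤ q) (m : ℕ) :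
    carlitzWeight q m * (q ^ m - 1) = m * (q - 1) := by
  rcases eq_or_ne m 0 with rfl | hm
  · simp [carlitzWeight]
  rcases eq_or_ne q 1 with rfl | hq1
  · simp
  have hqm : q ^ m - 1 ≠ 0 := sub_ne_zero.mpr ((pow_eq_one_iff_of_nonneg hq hm).not.mpr hq1)
  have hq1' : q - 1 ≠ 0 := sub_ne_zero.mpr hq1
  rw [carlitzWeight, if_neg hm, qb, Real.rpow_natCast]
  field_simp

noncomputable def extBetaPoly (q : ℝ) (r n : ℕ) (t : ℝ) : ℝ :=
  ∑ k ∈ range (n + 1), (-1) ^ (n - k) * (n.choose k : ℝ) * carlitzWeight q (k + r) * t ^ k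

theorem extBeta_eq_extBetaPoly {q : ℝ} (hq : 0 ≤ q) (r n : ℕ) (x : ℝ) :
    extBeta q r n x = ((q - 1) ^ n)⁻¹ * extBetaPoly q r n (q ^ x) := by
  rw [extBeta, extBetaPoly]
  congr 1
  refine sum_congr rfl fun k _ => ?_
  rw [mul_comm (k : ℝ), Real.rpow_mul hq, Real.rpow_natCast]
  rfl

theorem pow_mul_extBetaPoly_mul_sub {q : ℝ} (hq : 0 ≤ q) (r n : ℕ) (t : ℝ) :
    q ^ r * extBetaPoly q r n (q * t) - extBetaPoly q r n t
      = (q - 1) * (n * t * (t - 1) ^ (n - 1) + r * (t - 1) ^ n) := by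
  rw [← sum_neg_one_pow_choose_mul_add_mul_pow, mul_sum, extBetaPoly, extBetaPoly, mul_sum,
    ← sum_sub_distrib]
  refine sum_congr rfl fun k _ => ?_
  have hw := carlitzWeight_mul_pow_sub_one hq (k + r)
  push_cast at hw
  linear_combination (-1) ^ (n - k) * (n.choose k : ℝ) * t ^ k * hw

theorem pow_mul_extBeta_succ_sub {q : ℝ} (hq : 0 < q) (hq1 : q ≠ 1) (r n N : ℕ) :
    q ^ (r * (N + 1)) * extBeta q r n (N + 1 : ℕ) - q ^ (r * N) * extBeta q r n N
      = n * q ^ ((r + 1) * N) * qb q N ^ (n - 1) + (q - 1) * r * q ^ (r * N) * qb q N ^ n := by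
  have hq1' : q - 1 ≠ 0 := sub_ne_zero.mpr hq1
  have hqb : qb q N = (q ^ N - 1) / (q - 1) := by rw [qb, Real.rpow_natCast]
  have hshift := pow_mul_extBetaPoly_mul_sub hq.le r n (q ^ N)
  rw [extBeta_eq_extBetaPoly hq.le, extBeta_eq_extBetaPoly hq.le, Real.rpow_natCast,
    Real.rpow_natCast, pow_succ', mul_add, mul_one, pow_add, add_mul, pow_add, one_mul, hqb]
  cases n with
  | zero =>
    simp only [pow_zero, inv_one, one_mul, Nat.cast_zero, zero_mul, zero_add] at hshift ⊢
    linear_combination q ^ (r * N) * hshift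
  | succ m =>
    rw [Nat.add_sub_cancel] at hshift ⊢
    rw [div_pow, div_pow]
    field_simp
    linear_combination (q - 1) ^ m * hshift

theorem q_power_sum_via_extended_beta (q : ℝ) (hq : 0 < q) (hq1 : q ≠ 1) (r : ℕ) :
    ∀ n N : ℕ, 1 ≤ n → 1 ≤ N →
      (n : ℝ) * ∑ k ∈ range N, q ^ ((r + 1) * k) * (qb q k) ^ (n - 1)
        + (q - 1) * (r : ℝ) * ∑ k ∈ range N, q ^ (r * k) * (qb q k) ^ n
        = q ^ (r * N) * extBeta q r n (N : ℝ) - extBeta q r n 0 := by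
  intro n N _ _
  have telescope := sum_range_sub (fun k : ℕ => q ^ (r * k) * extBeta q r n k) N
  simp only [pow_mul_extBeta_succ_sub hq hq1, Nat.cast_zero, mul_zero, pow_zero, one_mul]
    at telescope
  rw [← telescope, sum_add_distrib, mul_sum, mul_sum]
  congr 1 <;> exact sum_congr rfl fun k _ => by ring
end

section
/- Let r ≥ 1 and n ≥ 1 be integers. Then the function q ↦ Σ_{k=0}^{∞} (r·q^{r·k} − (n+r)·q^{(r+1)·k}) · [k]^{n−1} (where [k] := (q^k − 1)/(q − 1)), defined for q in the open interval (0,1), tends to the n-th Bernoulli number B_n as q tends to 1 from the left. -/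
/-!
Since `(r - (n+r) y)(1 - y)^(n-1) = ∑_{j ≤ n} (-1)^j C(n,j) (r+j) y^j`, putting `y = q^k` and
summing the geometric series in `k` turns the series, for `q ∈ (0, 1)`, into
`(1 - q)^(1-n) ∑_{j ≤ n} (-1)^j C(n,j) (r+j) / (1 - q^(r+j))`. Over the common denominator
this is `A(q) / ((1 - q)^n D(q))` with polynomials `A` and `D = ∏_{j ≤ n} [r+j]`, so everything
rests on the expansion of `A` at `q = 1`.

That expansion is read off by the formal substitution `q = e^{-x}`: since
`m x / (1 - e^{-mx}) = ∑ B_k (-m x)^k / k!`, the product `x (1 - q)^n A(q)` becomes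
`(∑_j (-1)^j C(n,j) B(-(r+j) x)) · ∏_j (1 - q^(r+j))`. The first factor is an `n`-th finite
difference in `r`, so its coefficients of `x^k` vanish for `k < n` and equal `B_n` for `k = n`.
As `1 - e^{-x}` is `x` times a unit, this gives `A = B_n D(1) (1 - q)^n + O((1 - q)^(n+1))`, and
hence the limit `B_n`.
-/

open Finset
open scoped Nat
open Polynomial hiding bernoulli
open scoped PowerSeries
open PowerSeries (rescale mk)

theorem alternating_sum_choose_mul_add_pow {R : Type*} [CommRing R] (r : R) {n k : ℕ}
    (hk : k ≤ n) :
    ∑ j ∈ range (n + 1), (-1) ^ j * (n.choose j : R) * (r + j) ^ k =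
      if k = n then (-1) ^ n * (n ! : R) else 0 := by
  have hΔ : (fwdDiff 1)^[n] (fun x : R ↦ x ^ k) r = if k = n then (n ! : R) else 0 := by
    split_ifs with h
    · subst h
      simp [fwdDiff_iter_eq_factorial]
    · simp [fwdDiff_iter_pow_eq_zero_of_lt (lt_of_le_of_ne hk h)]
  rw [fwdDiff_iter_eq_sum_shift] at hΔ
  have hshift : ∑ j ∈ range (n + 1), (-1) ^ j * (n.choose j : R) * (r + j) ^ k =
      (-1) ^ n * ∑ j ∈ range (n + 1),
        ((-1 : ℤ) ^ (n - j) * n.choose j) • (r + j • (1 : R)) ^ k := by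
    rw [mul_sum]
    refine sum_congr rfl fun j hj ↦ ?_
    have hsign : (-1 : R) ^ n * (-1) ^ (n - j) = (-1) ^ j := by
      rw [← pow_add, show n + (n - j) = j + 2 * (n - j) by grind, pow_add, pow_mul]
      simp
    rw [zsmul_eq_mul, nsmul_one]
    push_cast
    linear_combination -(n.choose j : R) * (r + j) ^ k * hsign
  rw [hshift, hΔ]
  split_ifs <;> simp

theorem alternating_sum_choose_mul_add_mul_pow {R : Type*} [CommRing R] (r y : R) (n : ℕ) :
    ∑ j ∈ range (n + 2), (-1) ^ j * ((n + 1).choose j : R) * (r + j) * y ^ j =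
      (r - (n + 1 + r) * y) * (1 - y) ^ n := by
  have binom (m : ℕ) :
      ∑ j ∈ range (m + 1), (-1) ^ j * (m.choose j : R) * y ^ j = (1 - y) ^ m := by
    rw [sub_eq_neg_add, add_pow]
    refine sum_congr rfl fun j _ ↦ ?_
    rw [neg_pow]
    ring
  have weighted : ∑ j ∈ range (n + 2), (-1) ^ j * ((n + 1).choose j : R) * j * y ^ j =
      -(n + 1) * y * (1 - y) ^ n := by
    rw [sum_range_succ', ← binom, mul_sum]
    simp only [Nat.cast_zero, mul_zero, zero_mul, add_zero]
    refine sum_congr rfl fun j _ ↦ ?_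
    have h : ((n + 1).choose (j + 1) : R) * (j + 1) = (n + 1) * n.choose j := by
      exact_mod_cast congrArg (Nat.cast : ℕ → R) (Nat.add_one_mul_choose_eq n j).symm
    push_cast
    linear_combination (-1) ^ (j + 1) * y ^ (j + 1) * h
  have hsplit : ∑ j ∈ range (n + 2), (-1) ^ j * ((n + 1).choose j : R) * (r + j) * y ^ j =
      r * ∑ j ∈ range (n + 2), (-1) ^ j * ((n + 1).choose j : R) * y ^ j +
        ∑ j ∈ range (n + 2), (-1) ^ j * ((n + 1).choose j : R) * j * y ^ j := by
    rw [mul_sum, ← sum_add_distrib]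
    exact sum_congr rfl fun j _ ↦ by ring
  rw [hsplit, weighted, binom]
  ring

noncomputable def qInt (m : ℕ) : ℝ[X] := ∑ i ∈ range m, X ^ i

noncomputable def qSeriesDenom (r n : ℕ) : ℝ[X] := ∏ j ∈ range (n + 1), qInt (r + j)

noncomputable def qSeriesNumer (r n : ℕ) : ℝ[X] :=
  ∑ j ∈ range (n + 1), C ((-1) ^ j * n.choose j * (r + j : ℝ)) *
    ∏ i ∈ (range (n + 1)).erase j, qInt (r + i)

section Eval

variable {A : Type*} [CommRing A] [Algebra ℝ A] (x : A)

theorem one_sub_mul_aeval_qInt (m : ℕ) : (1 - x) * aeval x (qInt m) = 1 - x ^ m := by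
  simp [qInt, mul_neg_geom_sum]

theorem one_sub_pow_card_mul_aeval_prod_qInt {ι : Type*} (s : Finset ι) (e : ι → ℕ) :
    (1 - x) ^ #s * aeval x (∏ i ∈ s, qInt (e i)) = ∏ i ∈ s, (1 - x ^ e i) := by
  rw [map_prod, ← prod_const, ← prod_mul_distrib]
  exact prod_congr rfl fun i _ ↦ one_sub_mul_aeval_qInt x (e i)

theorem one_sub_pow_mul_aeval_qSeriesDenom (r n : ℕ) :
    (1 - x) ^ (n + 1) * aeval x (qSeriesDenom r n) =
      ∏ j ∈ range (n + 1), (1 - x ^ (r + j)) := by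
  simpa [qSeriesDenom] using one_sub_pow_card_mul_aeval_prod_qInt x (range (n + 1)) (r + ·)

theorem one_sub_pow_mul_aeval_qSeriesNumer (r n : ℕ) :
    (1 - x) ^ n * aeval x (qSeriesNumer r n) =
      ∑ j ∈ range (n + 1), algebraMap ℝ A ((-1) ^ j * n.choose j * (r + j : ℝ)) *
        ∏ i ∈ (range (n + 1)).erase j, (1 - x ^ (r + i)) := by
  rw [qSeriesNumer, map_sum, mul_sum]
  refine sum_congr rfl fun j hj ↦ ?_
  have hcard : #((range (n + 1)).erase j) = n := by simp [card_erase_of_mem hj]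
  rw [map_mul, aeval_C, mul_left_comm, ← one_sub_pow_card_mul_aeval_prod_qInt, hcard]

end Eval

theorem constantCoeff_aeval {R : Type*} [CommRing R] (f : R⟦X⟧) (p : R[X]) :
    PowerSeries.constantCoeff (aeval f p) = p.eval (PowerSeries.constantCoeff f) := by
  rw [aeval_def, hom_eval₂]
  congr

theorem X_sub_C_pow_dvd_of_X_pow_dvd_aeval {R : Type*} [CommRing R] [IsDomain R]
    {f : R⟦X⟧} (hf : PowerSeries.coeff 1 f ≠ 0) {p : R[X]} {N : ℕ}
    (h : PowerSeries.X ^ N ∣ aeval f p) : (X - C (PowerSeries.constantCoeff f)) ^ N ∣ p := by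
  induction N generalizing p with
  | zero => simp
  | succ N ih =>
    obtain ⟨p', rfl⟩ := ih (dvd_trans (pow_dvd_pow _ N.le_succ) h)
    set W : R⟦X⟧ := mk fun k ↦ PowerSeries.coeff (k + 1) f
    have hW : PowerSeries.constantCoeff W = PowerSeries.coeff 1 f := by simp [W]
    have hfW : aeval f (X - C (PowerSeries.constantCoeff f)) = PowerSeries.X * W := by
      rw [← PowerSeries.sub_const_eq_X_mul_shift]
      simp
    rw [map_mul, map_pow, hfW, mul_pow, pow_succ, mul_assoc,
      mul_dvd_mul_iff_left (pow_ne_zero _ PowerSeries.X_ne_zero), PowerSeries.X_dvd_iff,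
      map_mul, map_pow, hW, mul_eq_zero, constantCoeff_aeval] at h
    have hroot : p'.IsRoot (PowerSeries.constantCoeff f) := h.resolve_left (pow_ne_zero _ hf)
    rw [pow_succ]
    exact mul_dvd_mul_left _ (dvd_iff_isRoot.mpr hroot)

theorem rescale_bernoulliPowerSeries_mul {A : Type*} [CommRing A] [Algebra ℚ A] (a : A) :
    rescale a (bernoulliPowerSeries A) * (rescale a (PowerSeries.exp A) - 1) =
      PowerSeries.C a * PowerSeries.X := by
  simpa [PowerSeries.rescale_X] using
    congrArg (rescale a) (bernoulliPowerSeries_mul_exp_sub_one A)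

noncomputable def expNeg : ℝ⟦X⟧ := rescale (-1) (PowerSeries.exp ℝ)

theorem expNeg_pow (m : ℕ) : expNeg ^ m = rescale (-(m : ℝ)) (PowerSeries.exp ℝ) := by
  rw [expNeg, ← map_pow, PowerSeries.exp_pow_eq_rescale_exp, PowerSeries.rescale_rescale]
  ring_nf

theorem constantCoeff_expNeg : PowerSeries.constantCoeff expNeg = 1 := by
  simp [expNeg, ← PowerSeries.coeff_zero_eq_constantCoeff_apply, PowerSeries.coeff_rescale]

theorem coeff_one_expNeg : PowerSeries.coeff 1 expNeg = -1 := by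
  simp [expNeg, PowerSeries.coeff_rescale]

theorem exists_one_sub_expNeg_eq_X_mul :
    ∃ W : ℝ⟦X⟧, 1 - expNeg = PowerSeries.X * W ∧ PowerSeries.constantCoeff W = 1 := by
  refine ⟨-mk fun k ↦ PowerSeries.coeff (k + 1) expNeg, ?_, by simp [coeff_one_expNeg]⟩
  rw [mul_neg, ← PowerSeries.sub_const_eq_X_mul_shift, constantCoeff_expNeg, map_one, neg_sub]

theorem rescale_bernoulliPowerSeries_mul_one_sub_expNeg_pow (m : ℕ) :
    rescale (-(m : ℝ)) (bernoulliPowerSeries ℝ) * (1 - expNeg ^ m) =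
      PowerSeries.C (m : ℝ) * PowerSeries.X := by
  rw [expNeg_pow, ← neg_sub, mul_neg, rescale_bernoulliPowerSeries_mul, map_neg, neg_mul, neg_neg]

noncomputable def bernoulliDiff (r n : ℕ) : ℝ⟦X⟧ :=
  ∑ j ∈ range (n + 1), PowerSeries.C ((-1) ^ j * n.choose j : ℝ) *
    rescale (-(r + j : ℝ)) (bernoulliPowerSeries ℝ)

theorem coeff_bernoulliDiff {r n k : ℕ} (hk : k ≤ n) :
    PowerSeries.coeff k (bernoulliDiff r n) = if k = n then (bernoulli n : ℝ) else 0 := by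
  have hterm (j : ℕ) : PowerSeries.coeff k (PowerSeries.C ((-1) ^ j * n.choose j : ℝ) *
      rescale (-(r + j : ℝ)) (bernoulliPowerSeries ℝ)) =
      (-1) ^ k * (bernoulli k / k ! : ℝ) * ((-1) ^ j * n.choose j * (r + j) ^ k) := by
    simp only [PowerSeries.coeff_C_mul, PowerSeries.coeff_rescale, bernoulliPowerSeries,
      PowerSeries.coeff_mk, neg_pow (r + j : ℝ), eq_ratCast]
    push_cast
    ring
  simp only [bernoulliDiff, map_sum, hterm, ← mul_sum, alternating_sum_choose_mul_add_pow _ hk]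
  split_ifs with h
  · subst h
    have hsq : ((-1 : ℝ) ^ k) * (-1) ^ k = 1 := by
      rw [← mul_pow]
      simp
    field_simp
    linear_combination (bernoulli k : ℝ) * hsq
  · simp

theorem exists_bernoulliDiff_eq_X_pow_mul (r n : ℕ) :
    ∃ H : ℝ⟦X⟧,
      bernoulliDiff r n = PowerSeries.X ^ n * H ∧ PowerSeries.constantCoeff H = bernoulli n := by
  obtain ⟨H, hH⟩ : PowerSeries.X ^ n ∣ bernoulliDiff r n := PowerSeries.X_pow_dvd_iff.mpr
    fun k hk ↦ by rw [coeff_bernoulliDiff hk.le, if_neg hk.ne]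
  refine ⟨H, hH, ?_⟩
  have hcoeff := coeff_bernoulliDiff (r := r) (le_refl n)
  rwa [if_pos rfl, hH, PowerSeries.coeff_X_pow_mul', if_pos le_rfl, Nat.sub_self,
    PowerSeries.coeff_zero_eq_constantCoeff] at hcoeff

theorem X_mul_one_sub_expNeg_pow_mul_aeval_qSeriesNumer (r n : ℕ) :
    PowerSeries.X * ((1 - expNeg) ^ n * aeval expNeg (qSeriesNumer r n)) =
      bernoulliDiff r n * ((1 - expNeg) ^ (n + 1) * aeval expNeg (qSeriesDenom r n)) := by
  rw [one_sub_pow_mul_aeval_qSeriesNumer, one_sub_pow_mul_aeval_qSeriesDenom, bernoulliDiff,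
    sum_mul, mul_sum]
  refine sum_congr rfl fun j hj ↦ ?_
  have h := rescale_bernoulliPowerSeries_mul_one_sub_expNeg_pow (r + j)
  push_cast at h
  rw [← mul_prod_erase _ _ hj, ← PowerSeries.C_eq_algebraMap]
  simp only [map_mul, map_natCast]
  linear_combination -(PowerSeries.C ((-1) ^ j : ℝ) * (n.choose j : ℝ⟦X⟧) *
    ∏ i ∈ (range (n + 1)).erase j, (1 - expNeg ^ (r + i))) * h

theorem exists_qSeriesNumer_eq (r n : ℕ) :
    ∃ Q : ℝ[X], qSeriesNumer r n =
      C (bernoulli n * (qSeriesDenom r n).eval 1) * (1 - X) ^ n + (1 - X) ^ (n + 1) * Q := by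
  obtain ⟨W, hW, hW0⟩ := exists_one_sub_expNeg_eq_X_mul
  obtain ⟨H, hH, hH0⟩ := exists_bernoulliDiff_eq_X_pow_mul r n
  set c : ℝ := bernoulli n * (qSeriesDenom r n).eval 1
  set D := aeval expNeg (qSeriesDenom r n)
  have hA : aeval expNeg (qSeriesNumer r n) = PowerSeries.X ^ n * (W * H * D) := by
    have key := X_mul_one_sub_expNeg_pow_mul_aeval_qSeriesNumer r n
    rw [hH, hW] at key
    have hne : (PowerSeries.X : ℝ⟦X⟧) ^ (n + 1) * W ^ n ≠ 0 :=
      mul_ne_zero (pow_ne_zero _ PowerSeries.X_ne_zero) (pow_ne_zero _ fun h ↦ by simp [h] at hW0)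
    refine mul_left_cancel₀ hne ?_
    linear_combination key
  have hdvd : PowerSeries.X ^ (n + 1) ∣ aeval expNeg (qSeriesNumer r n - C c * (1 - X) ^ n) := by
    obtain ⟨V, hV⟩ : PowerSeries.X ∣ W * H * D - PowerSeries.C c * W ^ n := by
      rw [PowerSeries.X_dvd_iff]
      simp [D, c, hW0, hH0, constantCoeff_aeval, constantCoeff_expNeg]
    rw [map_sub, hA, map_mul, aeval_C, map_pow, map_sub, map_one, aeval_X, hW, pow_succ,
      ← PowerSeries.C_eq_algebraMap]
    exact ⟨V, by linear_combination PowerSeries.X ^ n * hV⟩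
  obtain ⟨Q, hQ⟩ := X_sub_C_pow_dvd_of_X_pow_dvd_aeval (by simp [coeff_one_expNeg]) hdvd
  have hsign : (X - C (PowerSeries.constantCoeff expNeg)) ^ (n + 1) =
      (-1) ^ (n + 1) * (1 - X) ^ (n + 1) := by
    rw [constantCoeff_expNeg, map_one, ← neg_pow, neg_sub]
  rw [hsign] at hQ
  exact ⟨(-1) ^ (n + 1) * Q, by linear_combination hQ⟩

theorem sum_div_eq_sum_mul_prod_erase_div_prod {ι K : Type*} [Field K] [DecidableEq ι]
    (s : Finset ι) (w ℓ : ι → K) (hℓ : ∀ i ∈ s, ℓ i ≠ 0) :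
    ∑ i ∈ s, w i / ℓ i =
      (∑ i ∈ s, w i * ∏ k ∈ s.erase i, ℓ k) / ∏ i ∈ s, ℓ i := by
  rw [eq_div_iff (prod_ne_zero_iff.mpr hℓ), sum_mul]
  refine sum_congr rfl fun i hi ↦ ?_
  rw [← mul_prod_erase _ _ hi]
  field_simp [hℓ i hi]

theorem eval_qInt (m : ℕ) (q : ℝ) : (qInt m).eval q = ∑ i ∈ range m, q ^ i := by
  simp [qInt, eval_finsetSum]

theorem qSeriesDenom_eval_pos {r n : ℕ} (hr : 1 ≤ r) {q : ℝ} (hq : 0 < q) :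
    0 < (qSeriesDenom r n).eval q := by
  rw [qSeriesDenom, eval_prod]
  refine prod_pos fun j _ ↦ ?_
  rw [eval_qInt]
  exact sum_pos (fun i _ ↦ pow_pos hq i) (nonempty_range_iff.mpr (by omega))

theorem q_series_term_eq (r m k : ℕ) (q : ℝ) :
    ((r : ℝ) * q ^ (r * k) - ((m + 1 : ℕ) + r : ℝ) * q ^ ((r + 1) * k)) *
        ((q ^ k - 1) / (q - 1)) ^ m =
      ((1 - q) ^ m)⁻¹ * ∑ j ∈ range (m + 2),
        (-1) ^ j * ((m + 1).choose j : ℝ) * (r + j) * (q ^ (r + j)) ^ k := by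
  have hsum :
      ∑ j ∈ range (m + 2), (-1) ^ j * ((m + 1).choose j : ℝ) * (r + j) * (q ^ (r + j)) ^ k =
        q ^ (r * k) * ((r - (m + 1 + r) * q ^ k) * (1 - q ^ k) ^ m) := by
    rw [← alternating_sum_choose_mul_add_mul_pow, mul_sum]
    exact sum_congr rfl fun j _ ↦ by ring
  have hqInt : (q ^ k - 1) / (q - 1) = (1 - q ^ k) / (1 - q) := by
    rw [← neg_div_neg_eq, neg_sub, neg_sub]
  rw [hsum, hqInt, div_pow]
  push_cast
  ring

theorem tsum_q_series_eq {r n : ℕ} (hr : 1 ≤ r) (hn : 1 ≤ n) {q : ℝ}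
    (hq : q ∈ Set.Ioo 0 1) :
    ∑' k : ℕ, ((r : ℝ) * q ^ (r * k) - ((n : ℝ) + (r : ℝ)) * q ^ ((r + 1) * k)) *
        ((q ^ k - 1) / (q - 1)) ^ (n - 1) =
      (qSeriesNumer r n).eval q / ((1 - q) ^ n * (qSeriesDenom r n).eval q) := by
  obtain ⟨m, rfl⟩ := Nat.exists_eq_add_of_le' hn
  obtain ⟨hq0, hq1⟩ := hq
  set w : ℕ → ℝ := fun j ↦ (-1) ^ j * ((m + 1).choose j : ℝ) * (r + j)
  have hlt (j : ℕ) : q ^ (r + j) < 1 := pow_lt_one₀ hq0.le hq1 (by omega)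
  have hℓ (j : ℕ) : 1 - q ^ (r + j) ≠ 0 := (sub_pos.mpr (hlt j)).ne'
  have hgeom :
      HasSum (fun k : ℕ ↦ ((1 - q) ^ m)⁻¹ * ∑ j ∈ range (m + 2), w j * (q ^ (r + j)) ^ k)
      (((1 - q) ^ m)⁻¹ * ∑ j ∈ range (m + 2), w j / (1 - q ^ (r + j))) :=
    (hasSum_sum fun j _ ↦
      (hasSum_geometric_of_lt_one (by positivity) (hlt j)).mul_left (w j)).mul_left _
  have hnumer := one_sub_pow_mul_aeval_qSeriesNumer q r (m + 1)
  have hdenom := one_sub_pow_mul_aeval_qSeriesDenom q r (m + 1)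
  simp only [coe_aeval_eq_eval, Algebra.algebraMap_self, RingHom.id_apply] at hnumer hdenom
  simp only [Nat.add_sub_cancel, q_series_term_eq]
  refine hgeom.tsum_eq.trans ?_
  rw [sum_div_eq_sum_mul_prod_erase_div_prod _ _ _ fun j _ ↦ hℓ j, ← hnumer, ← hdenom]
  have h1q : 1 - q ≠ 0 := (sub_pos.mpr hq1).ne'
  have hD := (qSeriesDenom_eval_pos (n := m + 1) hr hq0).ne'
  field_simp
  ring

theorem exists_tsum_q_series_eq {r n : ℕ} (hr : 1 ≤ r) (hn : 1 ≤ n) :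
    ∃ Q : ℝ[X], ∀ q ∈ Set.Ioo (0 : ℝ) 1,
      ∑' k : ℕ, ((r : ℝ) * q ^ (r * k) - ((n : ℝ) + (r : ℝ)) * q ^ ((r + 1) * k)) *
          ((q ^ k - 1) / (q - 1)) ^ (n - 1) =
        (bernoulli n * (qSeriesDenom r n).eval 1 + (1 - q) * Q.eval q) /
          (qSeriesDenom r n).eval q := by
  obtain ⟨Q, hQ⟩ := exists_qSeriesNumer_eq r n
  refine ⟨Q, fun q hq ↦ ?_⟩
  have h1q : 1 - q ≠ 0 := (sub_pos.mpr hq.2).ne'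
  have hD := (qSeriesDenom_eval_pos (n := n) hr hq.1).ne'
  rw [tsum_q_series_eq hr hn hq, hQ]
  simp only [eval_add, eval_mul, eval_C, eval_pow, eval_sub, eval_one, eval_X]
  field_simp
  ring

theorem bernoulli_as_limit_of_q_series (r n : ℕ) (hr : 1 ≤ r) (hn : 1 ≤ n) :
    Filter.Tendsto
      (fun q : ℝ => ∑' k : ℕ,
        ((r : ℝ) * q ^ (r * k) - ((n : ℝ) + (r : ℝ)) * q ^ ((r + 1) * k)) *
          ((q ^ k - 1) / (q - 1)) ^ (n - 1))
      (nhdsWithin 1 (Set.Ioo (0 : ℝ) 1))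
      (nhds ((bernoulli n : ℚ) : ℝ)) := by
  obtain ⟨Q, hQ⟩ := exists_tsum_q_series_eq hr hn
  have hD1 := (qSeriesDenom_eval_pos (n := n) hr one_pos).ne'
  have hcont : ContinuousAt (fun q : ℝ ↦ (bernoulli n * (qSeriesDenom r n).eval 1 +
      (1 - q) * Q.eval q) / (qSeriesDenom r n).eval q) 1 :=
    (by fun_prop : Continuous fun q : ℝ ↦ (bernoulli n * (qSeriesDenom r n).eval 1 +
      (1 - q) * Q.eval q)).continuousAt.div (qSeriesDenom r n).continuousAt hD1
  have hlim := hcont.tendsto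
  simp only [sub_self, zero_mul, add_zero, mul_div_cancel_right₀ _ hD1] at hlim
  exact (hlim.mono_left nhdsWithin_le_nhds).congr'
    (eventually_nhdsWithin_of_forall fun q hq ↦ (hQ q hq).symm)
end

section
/- Let q be a real number with q > 0 and q ≠ 1, and let k ≥ 0 be an integer. Then for every real number x such that x ∉ {0, 1, …, k}, q^{k·x} / [x]_{k+1} = (1/[k]!) · Σ_{i=0}^{k} (−1)^{k−i} · qbinom(k,i) · q^{(k²+k)/2 + (i²−i)/2} · (1/[x−i]). -/
open Finset

/-- The q-falling factorial `[x]_m = [x]·[x-1]⋯[x-m+1]`. -/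
noncomputable def qff (q x : ℝ) (m : ℕ) : ℝ := ∏ j ∈ range m, qb q (x - j)

/-- The q-factorial `[m]! = [m]_m`. -/
noncomputable def qfact (q : ℝ) (m : ℕ) : ℝ := qff q (m : ℝ) m

/-- The q-binomial coefficient `qbinom(k, i) = [k]! / ([i]!·[k-i]!)`. -/
noncomputable def qbinom (q : ℝ) (k i : ℕ) : ℝ := qfact q k / (qfact q i * qfact q (k - i))

/-!
Induction on `k`. With `f k x = q ^ (k * x) / [x]_(k+1)`, the identity
`[x] - [x - (k+1)] = q ^ (x - (k+1)) * [k+1]` and the two ways of splitting `[x]_(k+2)` give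
`[k+1] * f (k+1) x = q ^ (2k+1) * f k (x-1) - q ^ (k+1) * f k x`. By the q-Pascal rule the
coefficients of the partial fraction sums satisfy the matching recurrence.
-/

-- `c'` is the coefficient sequence of `(a X - b) * ∑ c i X ^ i`.
theorem sum_range_succ_succ_eq_of_coeff_recurrence {R : Type*} [CommRing R] (a b : R)
    (c c' g : ℕ → R) (k : ℕ) (h_zero : c' 0 = -(b * c 0))
    (h_succ : ∀ i < k, c' (i + 1) = a * c i - b * c (i + 1)) (h_top : c' (k + 1) = a * c k) :
    ∑ i ∈ range (k + 1 + 1), c' i * g i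
      = a * ∑ i ∈ range (k + 1), c i * g (i + 1) - b * ∑ i ∈ range (k + 1), c i * g i := by
  have h_mid : ∑ i ∈ range k, c' (i + 1) * g (i + 1)
      = a * ∑ i ∈ range k, c i * g (i + 1) - b * ∑ i ∈ range k, c (i + 1) * g (i + 1) := by
    rw [mul_sum, mul_sum, ← sum_sub_distrib]
    exact sum_congr rfl fun i hi => by rw [h_succ i (mem_range.1 hi)]; ring
  rw [sum_range_succ', sum_range_succ, h_mid, h_zero, h_top, sum_range_succ _ k,
    sum_range_succ' (fun i => c i * g i)]
  ring

theorem succ_sq_add_succ_div_two (k : ℕ) :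
    ((k + 1) ^ 2 + (k + 1)) / 2 = (k ^ 2 + k) / 2 + (k + 1) := by
  rw [show (k + 1) ^ 2 + (k + 1) = k ^ 2 + k + 2 * (k + 1) by ring,
    Nat.add_mul_div_left _ _ two_pos]

theorem succ_sq_sub_succ_div_two (i : ℕ) :
    ((i + 1) ^ 2 - (i + 1)) / 2 = (i ^ 2 - i) / 2 + i := by
  have : i ≤ i ^ 2 := Nat.le_self_pow two_ne_zero i
  rw [show (i + 1) ^ 2 - (i + 1) = i ^ 2 - i + 2 * i by rw [add_sq]; omega,
    Nat.add_mul_div_left _ _ two_pos]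

noncomputable def partialFractionCoeff (q : ℝ) (k i : ℕ) : ℝ :=
  (-1) ^ (k - i) * qbinom q k i * q ^ ((k ^ 2 + k) / 2 + (i ^ 2 - i) / 2)

section
variable {q : ℝ}

theorem qb_add (hq : 0 < q) (a b : ℝ) : qb q (a + b) = qb q a + q ^ a * qb q b := by
  simp only [qb, Real.rpow_add hq]
  ring

theorem qb_ne_zero (hq : 0 < q) (hq1 : q ≠ 1) {x : ℝ} (hx : x ≠ 0) : qb q x ≠ 0 := by
  refine div_ne_zero (sub_ne_zero.2 fun h => hx ?_) (sub_ne_zero.2 hq1)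
  exact (Real.rpow_right_inj hq hq1).1 (h.trans (Real.rpow_zero q).symm)

theorem qff_succ (x : ℝ) (m : ℕ) : qff q x (m + 1) = qff q x m * qb q (x - m) :=
  prod_range_succ _ _

theorem qff_succ' (x : ℝ) (m : ℕ) : qff q x (m + 1) = qb q x * qff q (x - 1) m := by
  rw [qff, prod_range_succ', mul_comm, qff]
  push_cast
  simp only [sub_zero, sub_add_eq_sub_sub_swap]

theorem qff_ne_zero (hq : 0 < q) (hq1 : q ≠ 1) {x : ℝ} {m : ℕ} (hx : ∀ i < m, x ≠ i) :
    qff q x m ≠ 0 :=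
  prod_ne_zero_iff.2 fun i hi => qb_ne_zero hq hq1 (sub_ne_zero.2 (hx i (mem_range.1 hi)))

theorem qfact_zero : qfact q 0 = 1 := by simp [qfact, qff]

theorem qfact_succ (m : ℕ) : qfact q (m + 1) = qb q (m + 1) * qfact q m := by
  rw [qfact, qff_succ', qfact]
  push_cast
  simp

theorem qfact_ne_zero (hq : 0 < q) (hq1 : q ≠ 1) (m : ℕ) : qfact q m ≠ 0 :=
  qff_ne_zero hq hq1 fun i hi => by exact_mod_cast hi.ne'

theorem qbinom_zero_right (hq : 0 < q) (hq1 : q ≠ 1) (k : ℕ) : qbinom q k 0 = 1 := by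
  rw [qbinom, qfact_zero, Nat.sub_zero, one_mul, div_self (qfact_ne_zero hq hq1 k)]

theorem qbinom_self (hq : 0 < q) (hq1 : q ≠ 1) (k : ℕ) : qbinom q k k = 1 := by
  rw [qbinom, Nat.sub_self, qfact_zero, mul_one, div_self (qfact_ne_zero hq hq1 k)]

theorem qbinom_succ_succ (hq : 0 < q) (hq1 : q ≠ 1) {k i : ℕ} (hi : i < k) :
    qbinom q (k + 1) (i + 1) = q ^ (k - i) * qbinom q k i + qbinom q k (i + 1) := by
  obtain ⟨d, rfl⟩ : ∃ d, k = i + 1 + d := ⟨k - i - 1, by omega⟩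
  have h_bracket : qb q ((i + 1 + d : ℕ) + 1) = qb q (d + 1) + q ^ (d + 1) * qb q (i + 1) := by
    rw [← Real.rpow_natCast]
    push_cast
    rw [← qb_add hq]
    ring_nf
  simp only [qbinom, show i + 1 + d + 1 - (i + 1) = d + 1 by omega,
    show i + 1 + d - i = d + 1 by omega, show i + 1 + d - (i + 1) = d by omega]
  rw [qfact_succ (i + 1 + d), qfact_succ i, qfact_succ d, h_bracket]
  have := qfact_ne_zero hq hq1 i
  have := qfact_ne_zero hq hq1 d
  have := qfact_ne_zero hq hq1 (i + 1 + d)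
  have := qb_ne_zero hq hq1 (x := i + 1) (by positivity)
  have := qb_ne_zero hq hq1 (x := d + 1) (by positivity)
  field_simp
  ring

theorem partialFractionCoeff_succ_zero (hq : 0 < q) (hq1 : q ≠ 1) (k : ℕ) :
    partialFractionCoeff q (k + 1) 0 = -(q ^ (k + 1) * partialFractionCoeff q k 0) := by
  simp only [partialFractionCoeff, qbinom_zero_right hq hq1, succ_sq_add_succ_div_two,
    Nat.sub_zero]
  ring

theorem partialFractionCoeff_succ_succ (hq : 0 < q) (hq1 : q ≠ 1) {k i : ℕ} (hi : i < k) :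
    partialFractionCoeff q (k + 1) (i + 1)
      = q ^ (2 * k + 1) * partialFractionCoeff q k i
        - q ^ (k + 1) * partialFractionCoeff q k (i + 1) := by
  obtain ⟨d, rfl⟩ : ∃ d, k = i + 1 + d := ⟨k - i - 1, by omega⟩
  simp only [partialFractionCoeff, qbinom_succ_succ hq hq1 hi, succ_sq_add_succ_div_two,
    succ_sq_sub_succ_div_two, show i + 1 + d + 1 - (i + 1) = d + 1 by omega,
    show i + 1 + d - i = d + 1 by omega, show i + 1 + d - (i + 1) = d by omega]
  ring

theorem partialFractionCoeff_succ_self (hq : 0 < q) (hq1 : q ≠ 1) (k : ℕ) :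
    partialFractionCoeff q (k + 1) (k + 1) = q ^ (2 * k + 1) * partialFractionCoeff q k k := by
  simp only [partialFractionCoeff, qbinom_self hq hq1, succ_sq_add_succ_div_two,
    succ_sq_sub_succ_div_two, Nat.sub_self]
  ring

theorem sum_partialFractionCoeff_succ (hq : 0 < q) (hq1 : q ≠ 1) (k : ℕ) (x : ℝ) :
    ∑ i ∈ range (k + 1 + 1), partialFractionCoeff q (k + 1) i * (1 / qb q (x - i))
      = q ^ (2 * k + 1) *
            ∑ i ∈ range (k + 1), partialFractionCoeff q k i * (1 / qb q (x - 1 - i))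
        - q ^ (k + 1) *
            ∑ i ∈ range (k + 1), partialFractionCoeff q k i * (1 / qb q (x - i)) := by
  rw [sum_range_succ_succ_eq_of_coeff_recurrence _ _ (partialFractionCoeff q k) _ _ k
    (partialFractionCoeff_succ_zero hq hq1 k)
    (fun i hi => partialFractionCoeff_succ_succ hq hq1 hi)
    (partialFractionCoeff_succ_self hq hq1 k)]
  simp only [Nat.cast_add, Nat.cast_one, sub_add_eq_sub_sub_swap]

theorem one_div_qff_sub_one_sub_one_div_qff (hq : 0 < q) {x : ℝ} {m : ℕ}
    (hx : qff q x (m + 1) ≠ 0) :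
    1 / qff q (x - 1) m - 1 / qff q x m = q ^ (x - m) * qb q m / qff q x (m + 1) := by
  have hx₁ := qff_succ' x m ▸ hx
  have hx₂ := qff_succ x m ▸ hx
  have h₁ : 1 / qff q (x - 1) m = qb q x / qff q x (m + 1) := by
    rw [qff_succ', div_mul_cancel_left₀ (left_ne_zero_of_mul hx₁), one_div]
  have h₂ : 1 / qff q x m = qb q (x - m) / qff q x (m + 1) := by
    rw [qff_succ, div_mul_cancel_right₀ (right_ne_zero_of_mul hx₂), one_div]
  have h_bracket := qb_add hq (x - m) m
  rw [sub_add_cancel] at h_bracket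
  rw [h₁, h₂, ← sub_div, h_bracket, add_sub_cancel_left]

theorem qb_mul_rpow_div_qff_succ (hq : 0 < q) {k : ℕ} {x : ℝ} (hx : qff q x (k + 1 + 1) ≠ 0) :
    qb q (k + 1) * (q ^ (((k : ℝ) + 1) * x) / qff q x (k + 1 + 1))
      = q ^ (2 * k + 1) * (q ^ ((k : ℝ) * (x - 1)) / qff q (x - 1) (k + 1))
        - q ^ (k + 1) * (q ^ ((k : ℝ) * x) / qff q x (k + 1)) := by
  have h_shift :
      q ^ (2 * k + 1) * q ^ ((k : ℝ) * (x - 1)) = q ^ (k + 1) * q ^ ((k : ℝ) * x) := by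
    simp only [← Real.rpow_natCast, ← Real.rpow_add hq]
    push_cast
    ring_nf
  have h_split :
      q ^ (((k : ℝ) + 1) * x) = q ^ (k + 1) * q ^ ((k : ℝ) * x) * q ^ (x - (k + 1)) := by
    simp only [← Real.rpow_natCast, ← Real.rpow_add hq]
    push_cast
    ring_nf
  have h_diff := one_div_qff_sub_one_sub_one_div_qff hq hx
  push_cast at h_diff
  calc qb q (k + 1) * (q ^ (((k : ℝ) + 1) * x) / qff q x (k + 1 + 1))
      = q ^ (k + 1) * q ^ ((k : ℝ) * x) *
          (q ^ (x - (k + 1)) * qb q (k + 1) / qff q x (k + 1 + 1)) := by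
        rw [h_split]; ring
    _ = q ^ (k + 1) * q ^ ((k : ℝ) * x) * (1 / qff q (x - 1) (k + 1) - 1 / qff q x (k + 1)) := by
        rw [h_diff]
    _ = _ := by linear_combination -h_shift / qff q (x - 1) (k + 1)

theorem qfact_mul_rpow_div_qff (hq : 0 < q) (hq1 : q ≠ 1) (k : ℕ) {x : ℝ}
    (hx : qff q x (k + 1) ≠ 0) :
    qfact q k * (q ^ ((k : ℝ) * x) / qff q x (k + 1))
      = ∑ i ∈ range (k + 1), partialFractionCoeff q k i * (1 / qb q (x - i)) := by
  induction k generalizing x with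
  | zero => simp [qfact_zero, qff, partialFractionCoeff, qbinom_self hq hq1]
  | succ k ih =>
    have hx₁ : qff q (x - 1) (k + 1) ≠ 0 := right_ne_zero_of_mul (qff_succ' x (k + 1) ▸ hx)
    have hx₂ : qff q x (k + 1) ≠ 0 := left_ne_zero_of_mul (qff_succ x (k + 1) ▸ hx)
    calc qfact q (k + 1) * (q ^ (((k + 1 : ℕ) : ℝ) * x) / qff q x (k + 1 + 1))
        = qfact q k * (qb q (k + 1) * (q ^ (((k : ℝ) + 1) * x) / qff q x (k + 1 + 1))) := by
          rw [qfact_succ]; push_cast; ring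
      _ = q ^ (2 * k + 1) * (qfact q k * (q ^ ((k : ℝ) * (x - 1)) / qff q (x - 1) (k + 1)))
          - q ^ (k + 1) * (qfact q k * (q ^ ((k : ℝ) * x) / qff q x (k + 1))) := by
          rw [qb_mul_rpow_div_qff_succ hq hx]; ring
      _ = _ := by rw [ih hx₁, ih hx₂, sum_partialFractionCoeff_succ hq hq1]

end

theorem q_partial_fraction_decomposition (q : ℝ) (hq : 0 < q) (hq1 : q ≠ 1)
    (k : ℕ) (x : ℝ) (hx : ∀ i : ℕ, i ≤ k → x ≠ (i : ℝ)) :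
    q ^ ((k : ℝ) * x) / qff q x (k + 1)
      = (1 / qfact q k) *
          ∑ i ∈ range (k + 1),
            (-1 : ℝ) ^ (k - i) * qbinom q k i *
              q ^ ((k ^ 2 + k) / 2 + (i ^ 2 - i) / 2) * (1 / qb q (x - i)) := by
  have hqff : qff q x (k + 1) ≠ 0 := qff_ne_zero hq hq1 fun i hi => hx i (Nat.lt_succ_iff.1 hi)
  rw [one_div_mul_eq_div, eq_div_iff (qfact_ne_zero hq hq1 k), mul_comm]
  exact qfact_mul_rpow_div_qff hq hq1 k hqff
end

section
/- Let q be a real number with q > 0 and q ≠ 1, let n ≥ 0 be an integer, and let S(n,0), S(n,1), …, S(n,n) be real numbers such that [x]^n = Σ_{k=0}^{n} q^{k(k−1)/2} · S(n,k) · [x]_k for every real x (this identity determines the S(n,k) uniquely; they are the Carlitz q-Stirling numbers of the second kind). Then β_n + q·β_{n+1} = Σ_{k=0}^{n} (−1)^k · ([k]!/[k+2]) · S(n,k). -/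
open Finset

/-- The Carlitz q-Bernoulli numbers `β_n`. -/
noncomputable def carlitzBetaNum (q : ℝ) (n : ℕ) : ℝ :=
  ((q - 1) ^ n)⁻¹ *
    ∑ k ∈ range (n + 1),
      (-1 : ℝ) ^ (n - k) * (n.choose k : ℝ) * (((k : ℝ) + 1) / qb q ((k : ℝ) + 1))

namespace BetaAux

open Polynomial

/-- The weight `w_m = (m+1)(q-1)/(q^{m+1}-1)`. -/
noncomputable def wfun (q : ℝ) (m : ℕ) : ℝ := ((m : ℝ) + 1) * (q - 1) / (q ^ (m + 1) - 1)

/-- The linear functional used in Carlitz's proof. -/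
noncomputable def Lam (q : ℝ) (n : ℕ) (p : ℝ[X]) : ℝ :=
  ∑ m ∈ range (n + 2), p.coeff m * wfun q m

variable {q : ℝ}

lemma qpow_ne_one (hq : 0 < q) (hq1 : q ≠ 1) {m : ℕ} (hm : m ≠ 0) : q ^ m ≠ 1 := by
  rcases lt_or_gt_of_ne hq1 with h | h
  · exact ne_of_lt (pow_lt_one₀ hq.le h hm)
  · exact ne_of_gt (one_lt_pow₀ h hm)

lemma qpow_sub_one_ne (hq : 0 < q) (hq1 : q ≠ 1) {m : ℕ} (hm : m ≠ 0) : q ^ m - 1 ≠ 0 :=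
  sub_ne_zero.2 (qpow_ne_one hq hq1 hm)

lemma qb_nat (m : ℕ) : qb q (m : ℝ) = (q ^ m - 1) / (q - 1) := by
  rw [qb, Real.rpow_natCast]

lemma coeff_comp_C_mul_X (p : ℝ[X]) (c : ℝ) (m : ℕ) :
    (p.comp (C c * X)).coeff m = c ^ m * p.coeff m := by
  induction p using Polynomial.induction_on' with
  | add p r hp hr => simp [add_comp, hp, hr, mul_add]
  | monomial i a =>
    rw [monomial_comp]
    simp only [mul_pow, ← C_pow, coeff_monomial, ← mul_assoc, ← C_mul, coeff_C_mul, coeff_X_pow,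
      mul_ite, mul_one, mul_zero]
    split_ifs with h1 h2 <;> simp_all <;> ring

lemma Lam_X_sub_one_pow (hq : 0 < q) (hq1 : q ≠ 1) (n : ℕ) {m : ℕ} (hm : m ≤ n + 1) :
    Lam q n ((X - C 1) ^ m) = (q - 1) ^ m * carlitzBetaNum q m := by
  have hq1' : q - 1 ≠ 0 := sub_ne_zero.2 hq1
  have hco : ∀ j : ℕ, ((X - C (1 : ℝ)) ^ m).coeff j = (-1 : ℝ) ^ (m - j) * (m.choose j : ℝ) := by
    intro j
    rw [sub_eq_add_neg, ← C_neg, coeff_X_add_C_pow]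
  have hw : ∀ j : ℕ, ((j : ℝ) + 1) / qb q ((j : ℝ) + 1) = wfun q j := by
    intro j
    have : ((j : ℝ) + 1) = ((j + 1 : ℕ) : ℝ) := by push_cast; ring
    rw [this, qb_nat, wfun, div_div_eq_mul_div]; push_cast; ring
  rw [carlitzBetaNum, ← mul_assoc, mul_inv_cancel₀ (pow_ne_zero _ hq1'), one_mul]
  rw [Lam]
  rw [← Finset.sum_subset (Finset.range_subset_range.2 (by omega) : range (m + 1) ⊆ range (n + 2))]
  · exact Finset.sum_congr rfl fun j _ => by rw [hco, hw, mul_assoc]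
  · intro j _ hj
    have : m.choose j = 0 := Nat.choose_eq_zero_of_lt (by simpa using hj)
    rw [hco, this]
    simp

lemma Lam_Mk (hq : 0 < q) (hq1 : q ≠ 1) (n : ℕ) {k : ℕ} (hk : k ≤ n) :
    Lam q n ((C q * X - C 1) * ∏ j ∈ range k, (X - C (q ^ j)))
      = (-1) ^ k * (q - 1) ^ 2 * (∏ j ∈ range k, (q ^ (j + 1) - 1)) / (q ^ (k + 2) - 1) := by
  have hq1' : q - 1 ≠ 0 := sub_ne_zero.2 hq1
  have hk2 : q ^ (k + 2) - 1 ≠ 0 := qpow_sub_one_ne hq hq1 (by omega)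
  set a : ℝ := (q ^ (k + 2) - 1)⁻¹ with ha
  set M : ℝ[X] := (C q * X - C 1) * ∏ j ∈ range k, (X - C (q ^ j)) with hM
  set H : ℝ[X] := C a * (C q * X - C 1) * ∏ j ∈ range (k + 1), (X - C (q ^ j)) with hH
  have hcomp : H.comp (C q * X) - H = X * M := by
    apply Polynomial.funext
    intro u
    simp only [hH, hM, eval_sub, eval_comp, eval_mul, eval_C, eval_X, eval_prod]
    have e1 : ∏ j ∈ range (k + 1), (q * u - q ^ j)
        = (q * u - 1) * (q ^ k * ∏ j ∈ range k, (u - q ^ j)) := by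
      rw [Finset.prod_range_succ']
      have : ∀ j ∈ range k, q * u - q ^ (j + 1) = q * (u - q ^ j) :=
        fun j _ => by ring
      rw [Finset.prod_congr rfl this, Finset.prod_mul_distrib, Finset.prod_const,
        Finset.card_range]
      ring
    have e2 : ∏ j ∈ range (k + 1), (u - q ^ j)
        = (∏ j ∈ range k, (u - q ^ j)) * (u - q ^ k) := by
      rw [Finset.prod_range_succ]
    rw [e1, e2, ha]
    field_simp
    ring
  have hcoeff : ∀ m : ℕ, M.coeff m = (q ^ (m + 1) - 1) * H.coeff (m + 1) := by
    intro m
    have h2 := congrArg (fun p : ℝ[X] => p.coeff (m + 1)) hcomp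
    simp only [coeff_sub, coeff_comp_C_mul_X, coeff_X_mul] at h2
    rw [← h2]; ring
  have hdegH : H.natDegree ≤ k + 2 := by
    refine natDegree_mul_le.trans ?_
    have h1 : (C a * (C q * X - C 1)).natDegree ≤ 1 := by
      refine natDegree_mul_le.trans ?_
      simp only [natDegree_C, zero_add]
      have : C q * X - C 1 = C q * X + C (-1) := by rw [C_neg, C_1]; ring
      rw [this]; exact natDegree_linear_le
    have h2 : (∏ j ∈ range (k + 1), (X - C (q ^ j))).natDegree ≤ k + 1 := by
      refine natDegree_prod_le _ _ |>.trans ?_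
      have h3 : ∀ j ∈ range (k + 1), (X - C (q ^ j)).natDegree = 1 :=
        fun j _ => natDegree_X_sub_C _
      rw [Finset.sum_congr rfl h3, Finset.sum_const, Finset.card_range, smul_eq_mul, mul_one]
    omega
  have hdeg : (Polynomial.derivative H).natDegree < n + 2 := by
    have := Polynomial.natDegree_derivative_le H
    omega
  have hLam : Lam q n M = (q - 1) * ((Polynomial.derivative H).eval 1) := by
    rw [Lam, eval_eq_sum_range' hdeg, Finset.mul_sum]
    refine Finset.sum_congr rfl fun m _ => ?_
    rw [hcoeff, coeff_derivative, wfun]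
    have h1 : q ^ (m + 1) - 1 ≠ 0 := qpow_sub_one_ne hq hq1 (by omega)
    field_simp
    ring
  have hprod : ∏ j ∈ range (k + 1), (X - C (q ^ j))
      = (∏ j ∈ range k, (X - C (q ^ (j + 1)))) * (X - C 1) := by
    rw [Finset.prod_range_succ']
    norm_num
  have hH2 : H = (X - C 1) * (C a * (C q * X - C 1) * ∏ j ∈ range k, (X - C (q ^ (j + 1)))) := by
    rw [hH, hprod]; ring
  have heval : (Polynomial.derivative H).eval 1
      = a * (q - 1) * ∏ j ∈ range k, (1 - q ^ (j + 1)) := by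
    rw [hH2, derivative_mul]
    simp [eval_prod]
  have hsign : ∏ j ∈ range k, (1 - q ^ (j + 1))
      = (-1 : ℝ) ^ k * ∏ j ∈ range k, (q ^ (j + 1) - 1) := by
    rw [show (∏ j ∈ range k, (1 - q ^ (j + 1)))
        = ∏ j ∈ range k, (-1 : ℝ) * (q ^ (j + 1) - 1) from
      Finset.prod_congr rfl fun j _ => by ring]
    rw [Finset.prod_mul_distrib, Finset.prod_const, Finset.card_range]
  rw [hLam, heval, hsign, ha]
  field_simp

lemma qpow_inj (hq : 0 < q) (hq1 : q ≠ 1) : Function.Injective (fun m : ℕ => q ^ m) := by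
  rcases lt_or_gt_of_ne hq1 with h | h
  · exact (strictAnti_nat_of_succ_lt fun m =>
      pow_lt_pow_right_of_lt_one₀ hq h (Nat.lt_succ_self m)).injective
  · exact (strictMono_nat_of_lt_succ fun m =>
      pow_lt_pow_right₀ h (Nat.lt_succ_self m)).injective

lemma h1_lemma (hq : 0 < q) (hq1 : q ≠ 1) (n : ℕ) (S : ℕ → ℝ)
    (hS : ∀ x : ℝ,
      (qb q x) ^ n = ∑ k ∈ range (n + 1), q ^ (k * (k - 1) / 2) * S k * qff q x k)
    (x : ℝ) :
    (q ^ x - 1) ^ n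
      = ∑ k ∈ range (n + 1), S k * (q - 1) ^ (n - k) * ∏ j ∈ range k, (q ^ x - q ^ j) := by
  have hq1' : q - 1 ≠ 0 := sub_ne_zero.2 hq1
  have hb : (q ^ x - 1) ^ n = qb q x ^ n * (q - 1) ^ n := by
    rw [qb, div_pow, div_mul_cancel₀ _ (pow_ne_zero _ hq1')]
  rw [hb, hS x, Finset.sum_mul]
  refine Finset.sum_congr rfl fun k hk => ?_
  have hk' : k ≤ n := by have := mem_range.1 hk; omega
  have hqd : (q : ℝ) ^ (k * (k - 1) / 2) * (q - 1) ^ k ≠ 0 :=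
    mul_ne_zero (pow_ne_zero _ hq.ne') (pow_ne_zero _ hq1')
  have hqff : qff q x k * (q ^ (k * (k - 1) / 2) * (q - 1) ^ k)
      = ∏ j ∈ range k, (q ^ x - q ^ j) := by
    rw [qff]
    have e : ∀ j ∈ range k, qb q (x - (j : ℕ)) = (q ^ x - q ^ j) / (q ^ j * (q - 1)) := by
      intro j _
      rw [qb, Real.rpow_sub hq, Real.rpow_natCast, div_sub_one (pow_ne_zero _ hq.ne'), div_div]
    rw [Finset.prod_congr rfl e, Finset.prod_div_distrib, Finset.prod_mul_distrib,
      Finset.prod_const, Finset.prod_pow_eq_pow_sum, Finset.sum_range_id, Finset.card_range]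
    exact div_mul_cancel₀ _ hqd
  have hpk : (q - 1) ^ (n - k) * (q - 1) ^ k = (q - 1) ^ n := by
    rw [← pow_add, Nat.sub_add_cancel hk']
  rw [← hqff, ← hpk]
  ring

lemma hPQ_lemma (hq : 0 < q) (hq1 : q ≠ 1) (n : ℕ) (S : ℕ → ℝ)
    (hS : ∀ x : ℝ,
      (qb q x) ^ n = ∑ k ∈ range (n + 1), q ^ (k * (k - 1) / 2) * S k * qff q x k) :
    ((X : ℝ[X]) - C 1) ^ n
      = ∑ k ∈ range (n + 1), C (S k * (q - 1) ^ (n - k)) * ∏ j ∈ range k, (X - C (q ^ j)) := by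
  apply eq_of_sub_eq_zero
  apply eq_zero_of_infinite_isRoot
  apply Set.infinite_of_injective_forall_mem (f := fun m : ℕ => q ^ m) (qpow_inj hq hq1)
  intro m
  simp only [Set.mem_setOf_eq, IsRoot, eval_sub, eval_pow, eval_X, eval_C, eval_finset_sum,
    eval_mul, eval_prod]
  rw [sub_eq_zero]
  have := h1_lemma hq hq1 n S hS (m : ℝ)
  rw [Real.rpow_natCast] at this
  exact this

lemma Lam_lin (n : ℕ) (a b : ℝ) (p r : ℝ[X]) :
    Lam q n (C a * p + C b * r) = a * Lam q n p + b * Lam q n r := by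
  simp only [Lam, coeff_add, coeff_C_mul, Finset.mul_sum, ← Finset.sum_add_distrib]
  exact Finset.sum_congr rfl fun m _ => by ring

lemma Lam_sum (n : ℕ) {ι : Type*} (s : Finset ι) (c : ι → ℝ) (p : ι → ℝ[X]) :
    Lam q n (∑ i ∈ s, C (c i) * p i) = ∑ i ∈ s, c i * Lam q n (p i) := by
  simp only [Lam, finset_sum_coeff, coeff_C_mul, Finset.sum_mul, Finset.mul_sum, mul_assoc]
  exact Finset.sum_comm

lemma qfact_eq (hq : 0 < q) (hq1 : q ≠ 1) (k : ℕ) :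
    qfact q k = (∏ j ∈ range k, (q ^ (j + 1) - 1)) / (q - 1) ^ k := by
  rw [qfact, qff]
  have e : ∀ j ∈ range k, qb q ((k : ℝ) - (j : ℕ)) = (q ^ (k - j) - 1) / (q - 1) := by
    intro j hj
    have hj' : j ≤ k := le_of_lt (mem_range.1 hj)
    rw [show ((k : ℝ) - (j : ℝ)) = ((k - j : ℕ) : ℝ) by push_cast [hj']; ring, qb_nat]
  rw [Finset.prod_congr rfl e, Finset.prod_div_distrib, Finset.prod_const, Finset.card_range]
  congr 1
  rw [show (∏ j ∈ range k, (q ^ (k - j) - 1))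
      = ∏ j ∈ range k, (fun i => q ^ (i + 1) - 1) (k - 1 - j) from
    Finset.prod_congr rfl fun j hj => by
      have := mem_range.1 hj
      congr 2
      omega]
  exact Finset.prod_range_reflect (fun i => q ^ (i + 1) - 1) k

end BetaAux

open BetaAux Polynomial in
theorem beta_sum_in_terms_of_q_stirling (q : ℝ) (hq : 0 < q) (hq1 : q ≠ 1)
    (n : ℕ) (S : ℕ → ℝ)
    (hS : ∀ x : ℝ,
      (qb q x) ^ n = ∑ k ∈ range (n + 1), q ^ (k * (k - 1) / 2) * S k * qff q x k) :
    carlitzBetaNum q n + q * carlitzBetaNum q (n + 1)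
      = ∑ k ∈ range (n + 1),
          (-1 : ℝ) ^ k * (qfact q k / qb q ((k : ℝ) + 2)) * S k := by
  have hq1' : q - 1 ≠ 0 := sub_ne_zero.2 hq1
  apply mul_left_cancel₀ (pow_ne_zero (n + 1) hq1')
  -- Left side via the functional Λ
  have hL : (q - 1) ^ (n + 1) * (carlitzBetaNum q n + q * carlitzBetaNum q (n + 1))
      = Lam q n ((C q * X - C 1) * (X - C 1) ^ n) := by
    have e : (C q * X - C 1) * ((X : ℝ[X]) - C 1) ^ n
        = C q * (X - C 1) ^ (n + 1) + C (q - 1) * (X - C 1) ^ n := by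
      rw [map_sub, C_1, pow_succ]; ring
    rw [e, Lam_lin, Lam_X_sub_one_pow hq hq1 n (le_refl (n + 1)),
      Lam_X_sub_one_pow hq hq1 n (by omega : n ≤ n + 1)]
    ring
  rw [hL, hPQ_lemma hq hq1 n S hS]
  have e2 : (C q * X - C 1) *
        ∑ k ∈ range (n + 1), C (S k * (q - 1) ^ (n - k)) * ∏ j ∈ range k, (X - C (q ^ j))
      = ∑ k ∈ range (n + 1), C (S k * (q - 1) ^ (n - k)) *
          ((C q * X - C 1) * ∏ j ∈ range k, ((X : ℝ[X]) - C (q ^ j))) := by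
    rw [Finset.mul_sum]
    exact Finset.sum_congr rfl fun k _ => by ring
  rw [e2, Lam_sum, Finset.mul_sum]
  refine Finset.sum_congr rfl fun k hk => ?_
  have hk' : k ≤ n := by have := mem_range.1 hk; omega
  rw [Lam_Mk hq hq1 n hk', qfact_eq hq hq1 k,
    show ((k : ℝ) + 2) = ((k + 2 : ℕ) : ℝ) by push_cast; ring, qb_nat]
  have hk2 : q ^ (k + 2) - 1 ≠ 0 := qpow_sub_one_ne hq hq1 (by omega)
  have hp : (q - 1) ^ (n - k) = (q - 1) ^ n / (q - 1) ^ k := by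
    rw [eq_div_iff (pow_ne_zero _ hq1'), ← pow_add, Nat.sub_add_cancel hk']
  rw [hp]
  field_simp
  ring
end
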